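/- arXiv:1510.06057 — 2 statements merged into one kernel-verified Lean document; each statement's English description precedes it below -/
import Mathlib

section
/- For every n ≥ 7, every connected n-vertex P-free 3-graph that contains a copy of the triangle C has at most 3n − 8 edges, and equality holds if and only if it is isomorphic to G_1(n) or G_2(n); that is, ex_conn(n;P|C) = 3n − 8 and Ex_conn(n;P|C) = {G_1(n), G_2(n)}. -/
/-!
Common framework: 3-uniform hypergraphs (`3-graphs`) with vertex set a `Finset ℕ`,
copies/embeddings, isomorphism, connectivity, concrete 3-graphs from the paper,
and (higher order) Turán-extremality.
-/

structure ThreeGraph where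
  verts : Finset ℕ
  edges : Finset (Finset ℕ)
  sub : ∀ e ∈ edges, e ⊆ verts
  card3 : ∀ e ∈ edges, e.card = 3

namespace ThreeGraph

/-- The 3-graph on vertex set `V` whose edges are the 3-element subsets of `V`
satisfying the predicate `p`. -/
noncomputable def mk3 (V : Finset ℕ) (p : Finset ℕ → Prop) : ThreeGraph :=
  letI := Classical.decPred p
  { verts := V
    edges := (V.powersetCard 3).filter p
    sub := fun e he => (Finset.mem_powersetCard.mp (Finset.mem_filter.mp he).1).1
    card3 := fun e he => (Finset.mem_powersetCard.mp (Finset.mem_filter.mp he).1).2 }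

/-- `H` contains a copy of `F` (i.e. a subhypergraph of `H` is isomorphic to `F`);
equivalently, `F` embeds into `H`. -/
def HasCopy (F H : ThreeGraph) : Prop :=
  ∃ f : ℕ → ℕ, Set.InjOn f ↑F.verts ∧ (∀ v ∈ F.verts, f v ∈ H.verts) ∧
    ∀ e ∈ F.edges, e.image f ∈ H.edges

/-- `F` and `H` are isomorphic 3-graphs. -/
def Iso (F H : ThreeGraph) : Prop :=
  ∃ f : ℕ → ℕ, Set.InjOn f ↑F.verts ∧ F.verts.image f = H.verts ∧
    F.edges.image (fun e => e.image f) = H.edges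

def Adj (H : ThreeGraph) (u v : ℕ) : Prop :=
  ∃ e ∈ H.edges, u ∈ e ∧ v ∈ e

/-- Connectivity: any two vertices are joined by a walk
(consecutive vertices share an edge). -/
def Connected (H : ThreeGraph) : Prop :=
  ∀ u ∈ H.verts, ∀ v ∈ H.verts, Relation.ReflTransGen H.Adj u v

/-- `P`: the loose 3-uniform path of length three. -/
noncomputable def pathP : ThreeGraph :=
  mk3 (Finset.range 7) (fun e => e = {0,1,2} ∨ e = {2,3,4} ∨ e = {4,5,6})

/-- `C`: the triangle. -/
noncomputable def triC : ThreeGraph :=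
  mk3 (Finset.range 6) (fun e => e = {0,1,2} ∨ e = {2,3,4} ∨ e = {4,5,0})

/-- `M`: a pair of disjoint edges. -/
noncomputable def matchM : ThreeGraph :=
  mk3 (Finset.range 6) (fun e => e = {0,1,2} ∨ e = {3,4,5})

/-- `P₂`: a pair of edges sharing exactly one vertex. -/
noncomputable def path2 : ThreeGraph :=
  mk3 (Finset.range 5) (fun e => e = {0,1,2} ∨ e = {2,3,4})

/-- `P₂ ∪ K₃`. -/
noncomputable def p2K3 : ThreeGraph :=
  mk3 (Finset.range 8) (fun e => e = {0,1,2} ∨ e = {2,3,4} ∨ e = {5,6,7})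

/-- `K_m`: the complete 3-graph on `m` vertices. -/
noncomputable def K (m : ℕ) : ThreeGraph := mk3 (Finset.range m) (fun _ => True)

/-- `S_n`: the full star on `n` vertices, with center `0`. -/
noncomputable def starS (n : ℕ) : ThreeGraph := mk3 (Finset.range n) (fun e => 0 ∈ e)

/-- The comet `Co(n)`: `K₄` on `{0,1,2,3}` and the full star with center `0`
on `{0} ∪ {4,…,n-1}`. -/
noncomputable def comet (n : ℕ) : ThreeGraph :=
  mk3 (Finset.range n)
    (fun e => e ⊆ ({0,1,2,3} : Finset ℕ) ∨ (0 ∈ e ∧ ∀ v ∈ e, v = 0 ∨ 4 ≤ v))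

/-- `G₁(n)` with `x,y,z = 0,1,2` and `v = 3`. -/
noncomputable def G1 (n : ℕ) : ThreeGraph :=
  mk3 (Finset.range n)
    (fun e => e = {0,1,2} ∨ (3 ∈ e ∧ (e ∩ ({0,1,2} : Finset ℕ)).Nonempty))

/-- `G₂(n)` with `x,y,z = 0,1,2`. -/
noncomputable def G2 (n : ℕ) : ThreeGraph :=
  mk3 (Finset.range n)
    (fun e => e = {0,1,2} ∨ (e ∩ ({0,1,2} : Finset ℕ)).card = 2)

/-- `G₃(n)` with `x = 0`, `y₁,y₂ = 1,2`, `z₁,z₂ = 3,4`. -/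
noncomputable def G3 (n : ℕ) : ThreeGraph :=
  mk3 (Finset.range n)
    (fun e => (e ⊆ ({0,1,2,3,4} : Finset ℕ) ∧ e ≠ {1,2,3} ∧ e ≠ {1,2,4}) ∨
      (∃ v ∈ e, 5 ≤ v ∧ (e = {0,3,v} ∨ e = {0,4,v})))

/-- `K₅⁺²`: `K₅` on `{0,…,4}` with `a,b = 0,1`, `c,d = 5,6`. -/
noncomputable def K5plus2 : ThreeGraph :=
  mk3 (Finset.range 7)
    (fun e => e ⊆ ({0,1,2,3,4} : Finset ℕ) ∨ e = {0,1,5} ∨ e = {0,1,6})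

/-- The rocket `Ro(n)`: the full star with center `x = 0` on `{0} ∪ {5,…,n-1}`,
plus vertices `a,b,c,d = 1,2,3,4` and edges `{x,a,b}, {a,b,c}, {a,b,d}`. -/
noncomputable def rocket (n : ℕ) : ThreeGraph :=
  mk3 (Finset.range n)
    (fun e => (0 ∈ e ∧ ∀ v ∈ e, v = 0 ∨ 5 ≤ v) ∨ e = {0,1,2} ∨ e = {1,2,3} ∨ e = {1,2,4})

/-- `K₆ ∪ K₁`. -/
noncomputable def K6K1 : ThreeGraph :=
  mk3 (Finset.range 7) (fun e => e ⊆ Finset.range 6)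

/-- `K₆ ∪ K_{n-6}`. -/
noncomputable def K6K (n : ℕ) : ThreeGraph :=
  mk3 (Finset.range n) (fun e => e ⊆ Finset.range 6 ∨ ∀ v ∈ e, 6 ≤ v)

/-- `K₆ ∪ S_{n-6}` (star centered at `6`). -/
noncomputable def K6star (n : ℕ) : ThreeGraph :=
  mk3 (Finset.range n) (fun e => e ⊆ Finset.range 6 ∨ (6 ∈ e ∧ ∀ v ∈ e, 6 ≤ v))

/-- `K₄ ∪ S_{n-4}` (star centered at `4`). -/
noncomputable def K4star (n : ℕ) : ThreeGraph :=
  mk3 (Finset.range n) (fun e => e ⊆ Finset.range 4 ∨ (4 ∈ e ∧ ∀ v ∈ e, 4 ≤ v))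

/-- `K₆ ∪ K₆ ∪ K₁` (on 13 vertices). -/
noncomputable def K6K6K1 : ThreeGraph :=
  mk3 (Finset.range 13) (fun e => e ⊆ Finset.range 6 ∨ e ⊆ Finset.Ico 6 12)

/-- `2K₆ ∪ 2K₁` (on 14 vertices). -/
noncomputable def twoK6twoK1 : ThreeGraph :=
  mk3 (Finset.range 14) (fun e => e ⊆ Finset.range 6 ∨ e ⊆ Finset.Ico 6 12)

/-- `K₅ ∪ K₅`. -/
noncomputable def K5K5 : ThreeGraph :=
  mk3 (Finset.range 10) (fun e => e ⊆ Finset.range 5 ∨ ∀ v ∈ e, 5 ≤ v)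

/-- `K₆ ∪ G₁(7)` (with `G₁(7)` on `{6,…,12}`, `x,y,z = 6,7,8`, `v = 9`). -/
noncomputable def K6G1 : ThreeGraph :=
  mk3 (Finset.range 13)
    (fun e => e ⊆ Finset.range 6 ∨ ((∀ v ∈ e, 6 ≤ v) ∧
      (e = {6,7,8} ∨ (9 ∈ e ∧ (e ∩ ({6,7,8} : Finset ℕ)).Nonempty))))

/-- `K₆ ∪ G₂(7)` (with `G₂(7)` on `{6,…,12}`, `x,y,z = 6,7,8`). -/
noncomputable def K6G2 : ThreeGraph :=
  mk3 (Finset.range 13)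
    (fun e => e ⊆ Finset.range 6 ∨ ((∀ v ∈ e, 6 ≤ v) ∧
      (e = {6,7,8} ∨ (e ∩ ({6,7,8} : Finset ℕ)).card = 2)))

/-- `H` is a member of `S` with the maximum number of edges. -/
def IsMaxIn (S : Set ThreeGraph) (H : ThreeGraph) : Prop :=
  H ∈ S ∧ ∀ G ∈ S, G.edges.card ≤ H.edges.card

/-- `cand 𝓕 n s` is the set of `n`-vertex `𝓕`-free 3-graphs not contained in any
`t`-extremal 3-graph for `t ≤ s`; so the `(s+1)`-st order Turán number of `𝓕` is the
maximal number of edges over `cand 𝓕 n s`, and the `(s+1)`-extremal 3-graphs are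
exactly those satisfying `IsMaxIn (cand 𝓕 n s)`. -/
def cand (𝓕 : Set ThreeGraph) (n : ℕ) : ℕ → Set ThreeGraph
  | 0 => {H | H.verts.card = n ∧ ∀ F ∈ 𝓕, ¬ HasCopy F H}
  | (s+1) => {H | H ∈ cand 𝓕 n s ∧ ∀ H', IsMaxIn (cand 𝓕 n s) H' → ¬ HasCopy H H'}

end ThreeGraph

/-!
Relabel `H` so that its vertex set is `range n` and its copy of `C` has the edges
`{0,1,2}, {2,3,4}, {4,5,0}`. Two triangle edges extend to a loose path every edge that meets
`range 6` in one vertex, or in a pair other than six "link pairs"; with connectivity, every other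
edge lies inside `range 6` or is `{x} ∪ p` with `x ≥ 6` and `p` in the link of `x`. One vertex
`x ≥ 6` together with the inside edges accounts for at most `13` edges, links of distinct
vertices cross-intersect, and at most one link contains two disjoint pairs, so every other link
has at most three pairs: `13 + 3 (n - 7) = 3n - 8`. In the equality case all links equal one of
four extremal links, so the graph is determined by the traces `e ∩ range 6` of its edges, and a
permutation of `range 6` matches these traces with those of `G₁(n)` or `G₂(n)`. The statements
about configurations on `range 6` are checked exhaustively.
-/

namespace ThreeGraph

open Finset

variable {F G H K : ThreeGraph}

theorem mem_mk3_edges {V : Finset ℕ} {p : Finset ℕ → Prop} {e : Finset ℕ} :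
    e ∈ (mk3 V p).edges ↔ e ⊆ V ∧ #e = 3 ∧ p e := by
  simp only [mk3, mem_filter, mem_powersetCard, and_assoc]

protected theorem ext (hv : H.verts = K.verts) (he : H.edges = K.edges) : H = K := by
  cases H; cases K; cases hv; cases he; rfl

def map (H : ThreeGraph) (φ : ℕ → ℕ) (hφ : Set.InjOn φ H.verts) : ThreeGraph where
  verts := H.verts.image φ
  edges := H.edges.image (image φ)
  sub := by
    simp only [mem_image]
    rintro _ ⟨e, he, rfl⟩
    exact image_subset_image (H.sub e he)
  card3 := by
    simp only [mem_image]
    rintro _ ⟨e, he, rfl⟩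
    rw [card_image_of_injOn (hφ.mono (by exact_mod_cast H.sub e he)), H.card3 e he]

theorem iso_map (φ : ℕ → ℕ) (hφ : Set.InjOn φ H.verts) : Iso H (H.map φ hφ) :=
  ⟨φ, hφ, rfl, rfl⟩

theorem image_invFunOn_image {f : ℕ → ℕ} {V e : Finset ℕ} (hf : Set.InjOn f V) (he : e ⊆ V) :
    (e.image f).image (Function.invFunOn f V) = e := by
  apply coe_injective
  push_cast
  exact hf.invFunOn_image (by exact_mod_cast he)

theorem Iso.trans (h₁ : Iso G H) (h₂ : Iso H K) : Iso G K := by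
  obtain ⟨f, hf, hfv, hfe⟩ := h₁
  obtain ⟨g, hg, hgv, hge⟩ := h₂
  refine ⟨g ∘ f, hg.comp hf ?_, by rw [← hgv, ← hfv, image_image], ?_⟩
  · intro a ha
    rw [← hfv, coe_image]
    exact Set.mem_image_of_mem f ha
  · rw [← hge, ← hfe, image_image]
    exact image_congr fun e _ => (image_image).symm

theorem Iso.symm (h : Iso H K) : Iso K H := by
  obtain ⟨f, hf, hv, he⟩ := h
  refine ⟨Function.invFunOn f H.verts, ?_, ?_, ?_⟩
  · rw [← hv, coe_image]
    exact Function.invFunOn_injOn_image f _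
  · rw [← hv, image_invFunOn_image hf subset_rfl]
  · rw [← he, image_image]
    exact (image_congr fun e he' => image_invFunOn_image hf (H.sub e he')).trans image_id

theorem Iso.card_edges_eq (h : Iso H K) : #H.edges = #K.edges := by
  obtain ⟨f, hf, -, he⟩ := h
  rw [← he, card_image_of_injOn]
  intro e₁ h₁ e₂ h₂ h₁₂
  rw [← image_invFunOn_image hf (H.sub e₁ h₁), ← image_invFunOn_image hf (H.sub e₂ h₂)]
  exact congrArg _ h₁₂

theorem HasCopy.of_iso (hc : HasCopy F H) (hi : Iso H K) : HasCopy F K := by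
  obtain ⟨f, hf, hfv, hfe⟩ := hc
  obtain ⟨g, hg, hgv, hge⟩ := hi
  refine ⟨g ∘ f, hg.comp hf fun v hv => hfv v hv, fun v hv => ?_, fun e he => ?_⟩
  · rw [← hgv]
    exact mem_image_of_mem g (hfv v hv)
  · rw [← hge, ← image_image]
    exact mem_image_of_mem _ (hfe e he)

theorem Connected.of_iso (hc : Connected H) (hi : Iso H K) : Connected K := by
  obtain ⟨f, -, hv, he⟩ := hi
  intro u hu v hv'
  rw [← hv, mem_image] at hu hv'
  obtain ⟨a, ha, rfl⟩ := hu
  obtain ⟨b, hb, rfl⟩ := hv'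
  refine (hc a ha b hb).lift f fun x y ⟨e, he', hx, hy⟩ => ?_
  exact ⟨e.image f, he ▸ mem_image_of_mem _ he', mem_image_of_mem f hx, mem_image_of_mem f hy⟩

theorem connected_of_adj_hub (c : ℕ) (hc : ∀ u ∈ H.verts, u ≠ c → H.Adj u c) : Connected H := by
  intro u hu v hv
  refine .trans (b := c) ?_ ?_
  · by_cases huc : u = c
    · rw [huc]
    · exact .single (hc u hu huc)
  · by_cases hvc : v = c
    · rw [hvc]
    · obtain ⟨e, he, hve, hce⟩ := hc v hv hvc
      exact .single ⟨e, he, hce, hve⟩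

theorem pathP_edges : pathP.edges = {{0,1,2}, {2,3,4}, {4,5,6}} := by
  ext e
  rw [pathP, mem_mk3_edges]
  simp only [mem_insert, mem_singleton]
  constructor
  · exact fun h => h.2.2
  · rintro (rfl | rfl | rfl) <;> decide

abbrev triangle : Finset (Finset ℕ) := {{0,1,2}, {2,3,4}, {4,5,0}}

theorem triC_edges : triC.edges = triangle := by
  ext e
  rw [triC, mem_mk3_edges]
  simp only [mem_insert, mem_singleton]
  constructor
  · exact fun h => h.2.2
  · rintro (rfl | rfl | rfl) <;> decide

theorem exists_eq_triple_of_mem {e : Finset ℕ} {u : ℕ} (he : #e = 3) (hu : u ∈ e) :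
    ∃ a b, e = {a, b, u} := by
  obtain ⟨x, y, z, -, -, -, rfl⟩ := card_eq_three.mp he
  simp only [mem_insert, mem_singleton] at hu
  rcases hu with rfl | rfl | rfl
  · exact ⟨y, z, by ext; simp only [mem_insert, mem_singleton]; tauto⟩
  · exact ⟨x, z, by ext; simp only [mem_insert, mem_singleton]; tauto⟩
  · exact ⟨x, y, rfl⟩

theorem exists_eq_triple_of_mem_of_mem {e : Finset ℕ} {u w : ℕ} (he : #e = 3) (hu : u ∈ e)
    (hw : w ∈ e) (huw : u ≠ w) : ∃ s, e = {u, s, w} := by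
  obtain ⟨a, b, rfl⟩ := exists_eq_triple_of_mem he hw
  simp only [mem_insert, mem_singleton] at hu
  rcases hu with rfl | rfl | rfl
  · exact ⟨b, rfl⟩
  · exact ⟨a, by ext; simp only [mem_insert, mem_singleton]; tauto⟩
  · exact absurd rfl huw

section LoosePath

variable {e₁ e₂ e₃ : Finset ℕ} (h₁ : #e₁ = 3) (h₂ : #e₂ = 3) (h₃ : #e₃ = 3)
  (h₁₂ : #(e₁ ∩ e₂) = 1) (h₂₃ : #(e₂ ∩ e₃) = 1) (h₁₃ : Disjoint e₁ e₃)
include h₁ h₂ h₃ h₁₂ h₂₃ h₁₃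

theorem exists_eq_loosePath :
    ∃ a b u s w c d, e₁ = {a, b, u} ∧ e₂ = {u, s, w} ∧ e₃ = {w, c, d} := by
  obtain ⟨u, hu⟩ := card_eq_one.mp h₁₂
  obtain ⟨w, hw⟩ := card_eq_one.mp h₂₃
  obtain ⟨hu₁, hu₂⟩ := mem_inter.mp (hu ▸ mem_singleton_self u)
  obtain ⟨hw₂, hw₃⟩ := mem_inter.mp (hw ▸ mem_singleton_self w)
  have huw : u ≠ w := by
    rintro rfl
    exact disjoint_left.mp h₁₃ hu₁ hw₃
  obtain ⟨a, b, rfl⟩ := exists_eq_triple_of_mem h₁ hu₁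
  obtain ⟨s, rfl⟩ := exists_eq_triple_of_mem_of_mem h₂ hu₂ hw₂ huw
  obtain ⟨c, d, rfl⟩ := exists_eq_triple_of_mem h₃ hw₃
  exact ⟨a, b, u, s, w, d, c, rfl, rfl, by ext; simp only [mem_insert, mem_singleton]; tauto⟩

theorem card_union_union_eq_seven : #(e₁ ∪ e₂ ∪ e₃) = 7 := by
  have h₁₂' := card_union_add_card_inter e₁ e₂
  have h₁₂₃ := card_union_add_card_inter (e₁ ∪ e₂) e₃
  rw [union_inter_distrib_right, disjoint_iff_inter_eq_empty.mp h₁₃, empty_union] at h₁₂₃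
  omega

end LoosePath

theorem hasCopy_pathP {e₁ e₂ e₃ : Finset ℕ} (h₁ : e₁ ∈ H.edges) (h₂ : e₂ ∈ H.edges)
    (h₃ : e₃ ∈ H.edges) (h₁₂ : #(e₁ ∩ e₂) = 1) (h₂₃ : #(e₂ ∩ e₃) = 1)
    (h₁₃ : Disjoint e₁ e₃) : HasCopy pathP H := by
  have h7 := card_union_union_eq_seven (H.card3 _ h₁) (H.card3 _ h₂) (H.card3 _ h₃) h₁₂ h₂₃ h₁₃
  obtain ⟨a, b, u, s, w, c, d, rfl, rfl, rfl⟩ :=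
    exists_eq_loosePath (H.card3 _ h₁) (H.card3 _ h₂) (H.card3 _ h₃) h₁₂ h₂₃ h₁₃
  let f : ℕ → ℕ := fun m => [a, b, u, s, w, c, d].getD m 0
  have hverts : pathP.verts.image f = {a, b, u} ∪ {u, s, w} ∪ {w, c, d} := by
    rw [show pathP.verts = {0,1,2} ∪ {2,3,4} ∪ {4,5,6} from by decide, image_union, image_union]
    simp [f]
  refine ⟨f, card_image_iff.mp (by rw [hverts, h7]; rfl), fun v hv => ?_, fun e he => ?_⟩
  · have hv' : f v ∈ ({a, b, u} ∪ {u, s, w} ∪ {w, c, d} : Finset ℕ) :=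
      hverts ▸ mem_image_of_mem f hv
    rcases mem_union.mp hv' with hv' | hv'
    · rcases mem_union.mp hv' with hv' | hv'
      exacts [H.sub _ h₁ hv', H.sub _ h₂ hv']
    · exact H.sub _ h₃ hv'
  · rw [pathP_edges] at he
    simp only [mem_insert, mem_singleton] at he
    rcases he with rfl | rfl | rfl
    · simpa [f] using h₁
    · simpa [f] using h₂
    · simpa [f] using h₃

theorem HasCopy.exists_disjoint_edges (hc : HasCopy pathP H) :
    ∃ e₁ ∈ H.edges, ∃ e₂ ∈ H.edges, Disjoint e₁ e₂ := by
  obtain ⟨f, hf, -, he⟩ := hc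
  have hmem : ∀ e ∈ pathP.edges, e ⊆ pathP.verts := pathP.sub
  rw [pathP_edges] at he hmem
  simp only [mem_insert, mem_singleton, forall_eq_or_imp, forall_eq] at he hmem
  refine ⟨_, he.1, _, he.2.2, ?_⟩
  rw [disjoint_iff_inter_eq_empty, ← image_inter_of_injOn _ _
    (hf.mono (by exact_mod_cast union_subset hmem.1 hmem.2.2))]
  simp

theorem exists_injOn_image_eq_range {V : Finset ℕ} {n k : ℕ} (hV : #V = n) {v : ℕ → ℕ}
    (hv : ∀ i < k, v i ∈ V) (hinj : Set.InjOn v (range k)) :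
    ∃ φ : ℕ → ℕ, Set.InjOn φ V ∧ V.image φ = range n ∧ ∀ i < k, φ (v i) = i := by
  have hvV : (range k).image v ⊆ V := image_subset_iff.mpr fun i hi => hv i (mem_range.mp hi)
  have hk : k ≤ n := by
    simpa [← hV, card_image_of_injOn hinj] using card_le_card hvV
  obtain ⟨g, hg⟩ := exists_equiv_extend_of_card_eq (α := Fin n) (t := V)
    (s := univ.filter fun i => i.val < k) (f := fun i => v i) (by simp [hV])
    (by
      intro w hw
      simp only [mem_image, mem_filter, mem_univ, true_and] at hw
      obtain ⟨i, hi, rfl⟩ := hw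
      exact hv i hi)
    (fun i hi j hj hij => Fin.val_injective <| hinj (by simpa using hi) (by simpa using hj) hij)
  refine ⟨fun w => if h : w ∈ V then (g.symm ⟨w, h⟩ : ℕ) else 0, ?_, ?_, ?_⟩
  · intro a ha b hb hab
    simp only [dif_pos (mem_coe.mp ha), dif_pos (mem_coe.mp hb)] at hab
    simpa using g.symm.injective (Fin.val_injective hab)
  · ext m
    simp only [mem_image, mem_range]
    constructor
    · rintro ⟨w, hw, rfl⟩
      simp [dif_pos hw]
    · intro hm
      refine ⟨g ⟨m, hm⟩, (g ⟨m, hm⟩).2, ?_⟩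
      simp
  · intro i hi
    have hgi : g ⟨i, by omega⟩ = ⟨v i, hv i hi⟩ := Subtype.ext (hg _ (by simpa using hi))
    simp [dif_pos (hv i hi), ← hgi]

theorem exists_iso_triangle_subset {n : ℕ} (hV : #H.verts = n) (hC : HasCopy triC H) :
    ∃ K, Iso H K ∧ K.verts = range n ∧ triangle ⊆ K.edges := by
  obtain ⟨f, hf, hfv, hfe⟩ := hC
  obtain ⟨φ, hφ, himg, hφf⟩ :=
    exists_injOn_image_eq_range hV (fun i hi => hfv i (mem_range.mpr hi)) hf
  refine ⟨H.map φ hφ, iso_map φ hφ, himg, fun t ht => ?_⟩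
  have htR : t ⊆ range 6 := by revert t; decide
  have ht' : t = (t.image f).image φ := by
    rw [image_image, image_congr (f := φ ∘ f) (g := id) fun i hi => hφf i (mem_range.mp (htR hi)),
      image_id]
  rw [ht']
  exact mem_image_of_mem _ (hfe t (triC_edges ▸ ht))

/-- The pairs `p` of triangle vertices such that an edge `{x} ∪ p` with `x` off the triangle
does not extend to a loose path: two vertices of degree two, or a vertex of degree two and the
opposite vertex of degree one. -/
abbrev linkPairs : Finset (Finset ℕ) := {{0,2}, {2,4}, {0,4}, {0,3}, {2,5}, {1,4}}

def ExtendsToPath (s : Finset ℕ) : Prop :=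
  ∃ r₁ ∈ triangle, ∃ r₂ ∈ triangle, #(s ∩ r₁) = 1 ∧ #(r₁ ∩ r₂) = 1 ∧ Disjoint s r₂

instance : DecidablePred ExtendsToPath := fun s => by unfold ExtendsToPath; infer_instance

theorem subset_range_of_mem_triangle : ∀ r ∈ triangle, r ⊆ range 6 := by decide

theorem extendsToPath_of_card : ∀ s ∈ (range 6).powerset,
    #s = 1 ∨ (#s = 2 ∧ s ∉ linkPairs) → ExtendsToPath s := by decide

theorem exists_triangle_card_inter_eq_one :
    ∀ s ∈ (range 6).powersetCard 2, ∃ r ∈ triangle, #(s ∩ r) = 1 := by decide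

theorem inter_range_inter {e r : Finset ℕ} (hr : r ⊆ range 6) : e ∩ range 6 ∩ r = e ∩ r := by
  rw [inter_assoc, inter_eq_right.mpr hr]

theorem hasCopy_pathP_of_extendsToPath (hT : triangle ⊆ K.edges) {e : Finset ℕ}
    (he : e ∈ K.edges) (hs : ExtendsToPath (e ∩ range 6)) : HasCopy pathP K := by
  obtain ⟨r₁, hr₁, r₂, hr₂, h₁, h₁₂, h₂⟩ := hs
  rw [inter_range_inter (subset_range_of_mem_triangle r₁ hr₁)] at h₁
  rw [disjoint_iff_inter_eq_empty, inter_range_inter (subset_range_of_mem_triangle r₂ hr₂),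
    ← disjoint_iff_inter_eq_empty] at h₂
  exact hasCopy_pathP he (hT hr₁) (hT hr₂) h₁ h₁₂ h₂

theorem hasCopy_pathP_of_bridge (hT : triangle ⊆ K.edges) {g m : Finset ℕ} (hg : g ∈ K.edges)
    (hm : m ∈ K.edges) (hgR : Disjoint g (range 6)) (hgm : ¬ Disjoint g m)
    (h2 : #(m ∩ range 6) = 2) :
    HasCopy pathP K := by
  obtain ⟨r, hr, hmr⟩ := exists_triangle_card_inter_eq_one _
    (mem_powersetCard.mpr ⟨inter_subset_right, h2⟩)
  have hrR := subset_range_of_mem_triangle r hr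
  have hout : #(m \ range 6) = 1 := by
    have := card_sdiff_add_card_inter m (range 6)
    rw [K.card3 m hm] at this
    omega
  refine hasCopy_pathP hg hm (hT hr) (le_antisymm ?_ ?_) ?_ (hgR.mono_right hrR)
  · refine (card_le_card fun z hz => ?_).trans_eq hout
    exact mem_sdiff.mpr ⟨(mem_inter.mp hz).2, disjoint_left.mp hgR (mem_inter.mp hz).1⟩
  · exact card_pos.mpr (not_disjoint_iff_nonempty_inter.mp hgm)
  · rwa [← inter_range_inter hrR]

section Normalized

variable {e : Finset ℕ} (hT : triangle ⊆ K.edges) (hP : ¬ HasCopy pathP K)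
include hT hP

theorem card_inter_range_ne_one (he : e ∈ K.edges) : #(e ∩ range 6) ≠ 1 := fun h =>
  hP <| hasCopy_pathP_of_extendsToPath hT he <|
    extendsToPath_of_card _ (mem_powerset.mpr inter_subset_right) (.inl h)

theorem inter_range_mem_linkPairs (he : e ∈ K.edges) (h2 : #(e ∩ range 6) = 2) :
    e ∩ range 6 ∈ linkPairs := by
  by_contra h
  exact hP <| hasCopy_pathP_of_extendsToPath hT he <|
    extendsToPath_of_card _ (mem_powerset.mpr inter_subset_right) (.inr ⟨h2, h⟩)

/-- Vertices on edges avoiding the triangle are closed under adjacency: an edge from such a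
vertex to the triangle would start a loose path. -/
theorem not_disjoint_range (hconn : Connected K) (he : e ∈ K.edges) :
    ¬ Disjoint e (range 6) := by
  intro hdisj
  let Far : ℕ → Prop := fun a => ∃ g ∈ K.edges, a ∈ g ∧ Disjoint g (range 6)
  have hclosed : ∀ a b, K.Adj a b → Far a → Far b := by
    rintro a b ⟨m, hm, ham, hbm⟩ ⟨g, hg, hag, hgR⟩
    by_cases hmR : Disjoint m (range 6)
    · exact ⟨m, hm, hbm, hmR⟩
    have haR : a ∉ range 6 := disjoint_left.mp hgR hag
    have hlt : #(m ∩ range 6) < 3 := (K.card3 m hm) ▸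
      card_lt_card ⟨inter_subset_left, fun h => haR (mem_inter.mp (h ham)).2⟩
    have hne : #(m ∩ range 6) ≠ 0 := by
      rwa [Ne, card_eq_zero, ← disjoint_iff_inter_eq_empty]
    have h1 := card_inter_range_ne_one hT hP hm
    exact absurd (hasCopy_pathP_of_bridge hT hg hm hgR
      (not_disjoint_iff.mpr ⟨a, hag, ham⟩) (by omega)) hP
  obtain ⟨u, hu⟩ := card_pos.mp (by rw [K.card3 e he]; omega : 0 < #e)
  have h0 : 0 ∈ K.verts := K.sub _ (hT (by decide : {0,1,2} ∈ triangle)) (by decide)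
  have hfar : ∀ b, Relation.ReflTransGen K.Adj u b → Far b := fun b hb => by
    induction hb with
    | refl => exact ⟨e, he, hu, hdisj⟩
    | tail _ hab ih => exact hclosed _ _ hab ih
  obtain ⟨g, -, h0g, hgR⟩ := hfar 0 (hconn u (K.sub e he hu) 0 h0)
  exact disjoint_left.mp hgR h0g (by decide)

theorem two_le_card_inter_range (hconn : Connected K) (he : e ∈ K.edges) :
    2 ≤ #(e ∩ range 6) := by
  have h0 : #(e ∩ range 6) ≠ 0 := by
    rw [Ne, card_eq_zero, ← disjoint_iff_inter_eq_empty]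
    exact not_disjoint_range hT hP hconn he
  have h1 := card_inter_range_ne_one hT hP he
  omega

end Normalized

noncomputable def ofTrace (n : ℕ) (q : Finset ℕ → Prop) : ThreeGraph :=
  mk3 (range n) fun e => q (e ∩ range 6)

theorem mem_ofTrace_edges {n : ℕ} {q : Finset ℕ → Prop} {e : Finset ℕ} :
    e ∈ (ofTrace n q).edges ↔ e ⊆ range n ∧ #e = 3 ∧ q (e ∩ range 6) :=
  mem_mk3_edges

def inside (K : ThreeGraph) : Finset (Finset ℕ) := K.edges.filter (· ⊆ range 6)

def link (K : ThreeGraph) (x : ℕ) : Finset (Finset ℕ) :=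
  (powersetCard 2 (range 6)).filter (insert x · ∈ K.edges)

theorem exists_eq_insert_inter_range {e : Finset ℕ} (he : #e = 3) (h2 : #(e ∩ range 6) = 2) :
    ∃ x ∉ range 6, e = insert x (e ∩ range 6) := by
  obtain ⟨x, hx⟩ : ∃ x, e \ range 6 = {x} := by
    rw [← card_eq_one]
    have := card_sdiff_add_card_inter e (range 6)
    omega
  refine ⟨x, (mem_sdiff.mp (hx ▸ mem_singleton_self x)).2, ?_⟩
  rw [insert_eq, ← hx, sdiff_union_inter]

theorem inter_range_of_insert {x : ℕ} {p : Finset ℕ} (hx : x ∉ range 6) (hp : p ⊆ range 6) :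
    insert x p ∩ range 6 = p := by
  rw [insert_inter_of_notMem hx, inter_eq_left.mpr hp]

section TwoLeTrace

variable {n : ℕ} (hKv : K.verts = range n) (h2 : ∀ e ∈ K.edges, 2 ≤ #(e ∩ range 6))
include hKv h2

theorem filter_not_subset_range_edges :
    K.edges.filter (¬ · ⊆ range 6) = (Ico 6 n).biUnion fun x => (link K x).image (insert x) := by
  ext e
  simp only [mem_filter, mem_biUnion, mem_image, link, mem_powersetCard, mem_Ico]
  constructor
  · rintro ⟨he, hnot⟩
    have h3 : #(e ∩ range 6) ≠ 3 := fun h3 => hnot <| inter_eq_left.mp <|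
      eq_of_subset_of_card_le inter_subset_left (by rw [h3, K.card3 e he])
    have hle : #(e ∩ range 6) ≤ 3 := (card_le_card inter_subset_left).trans (K.card3 e he).le
    obtain ⟨x, hxR, hxe⟩ := exists_eq_insert_inter_range (K.card3 e he) (by have := h2 e he; omega)
    have hxn : x < n := by
      have := K.sub e he (hxe ▸ mem_insert_self x _)
      rwa [hKv, mem_range] at this
    exact ⟨x, ⟨by simpa using hxR, hxn⟩, _, ⟨⟨inter_subset_right, by have := h2 e he; omega⟩,
      hxe ▸ he⟩, hxe.symm⟩
  · rintro ⟨x, ⟨hx6, -⟩, p, ⟨⟨hpR, -⟩, hpe⟩, rfl⟩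
    refine ⟨hpe, fun h => ?_⟩
    have := mem_range.mp (h (mem_insert_self x p))
    omega

/-- Every edge off the triangle is `{x} ∪ p` for a unique vertex `x ≥ 6` and pair `p`. -/
theorem card_edges_eq_card_inside_add_sum_link :
    #K.edges = #(inside K) + ∑ x ∈ Ico 6 n, #(link K x) := by
  have hxp : ∀ x ∈ Ico 6 n, ∀ y, ∀ p ∈ link K y, x ∉ p := fun x hx y p hp hxp => by
    have := (mem_powersetCard.mp (mem_filter.mp hp).1).1 hxp
    simp only [mem_range, mem_Ico] at this hx
    omega
  rw [← card_filter_add_card_filter_not (· ⊆ range 6), filter_not_subset_range_edges hKv h2,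
    card_biUnion, inside]
  · refine congrArg _ (sum_congr rfl fun x hx => card_image_of_injOn fun p hp q hq hpq => ?_)
    rw [← erase_insert (hxp x hx x p hp), ← erase_insert (hxp x hx x q hq)]
    exact congrArg (erase · x) hpq
  · intro x hx y hy hxy
    refine disjoint_left.mpr fun e hex hey => ?_
    obtain ⟨p, hp, rfl⟩ := mem_image.mp hex
    obtain ⟨q, hq, hqp⟩ := mem_image.mp hey
    have : x ∈ insert y q := hqp ▸ mem_insert_self x p
    rcases mem_insert.mp this with h | h
    · exact hxy h
    · exact hxp x hx y q hq h

theorem eq_ofTrace_of_link_eq {L : Finset (Finset ℕ)} {x₀ : ℕ} (hx₀ : x₀ ∈ Ico 6 n)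
    (hL : ∀ x ∈ Ico 6 n, link K x = L) : K = ofTrace n fun s => s ∈ inside K ∨ s ∈ L := by
  refine ThreeGraph.ext hKv (Finset.ext fun e => ?_)
  rw [mem_ofTrace_edges]
  constructor
  · intro he
    refine ⟨hKv ▸ K.sub e he, K.card3 e he, ?_⟩
    by_cases heR : e ⊆ range 6
    · rw [inter_eq_left.mpr heR]
      exact .inl (mem_filter.mpr ⟨he, heR⟩)
    · have he' : e ∈ K.edges.filter (¬ · ⊆ range 6) := mem_filter.mpr ⟨he, heR⟩
      rw [filter_not_subset_range_edges hKv h2] at he'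
      obtain ⟨x, hx, p, hp, rfl⟩ : ∃ x ∈ Ico 6 n, ∃ p ∈ link K x, insert x p = e := by
        simpa only [mem_biUnion, mem_image] using he'
      have hxR : x ∉ range 6 := by simp only [mem_Ico, mem_range] at hx ⊢; omega
      rw [inter_range_of_insert hxR (mem_powersetCard.mp (mem_filter.mp hp).1).1, ← hL x hx]
      exact .inr hp
  · rintro ⟨heV, he3, hq | hq⟩
    · obtain ⟨hin, hinR⟩ := mem_filter.mp hq
      rwa [eq_of_subset_of_card_le inter_subset_left (by rw [K.card3 _ hin, he3])] at hin
    · rw [← hL x₀ hx₀] at hq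
      have hp2 := (mem_powersetCard.mp (mem_filter.mp hq).1).2
      obtain ⟨x, hxR, hxe⟩ := exists_eq_insert_inter_range he3 hp2
      have hx : x ∈ Ico 6 n := by
        have := mem_range.mp (heV (hxe ▸ mem_insert_self x _))
        simp only [mem_Ico, mem_range] at hxR ⊢
        omega
      rw [hL x₀ hx₀, ← hL x hx] at hq
      rw [hxe]
      exact (mem_filter.mp hq).2

end TwoLeTrace

section OfTrace

variable {n : ℕ} {q q' : Finset ℕ → Prop}

theorem mem_ofTrace_edges_of_subset_range (hn : 6 ≤ n) {t : Finset ℕ} (ht : t ⊆ range 6) :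
    t ∈ (ofTrace n q).edges ↔ #t = 3 ∧ q t := by
  rw [mem_ofTrace_edges, inter_eq_left.mpr ht]
  exact and_iff_right (ht.trans (range_subset_range.mpr hn))

theorem insert_mem_ofTrace_edges {x : ℕ} (hx : x ∈ Ico 6 n) {p : Finset ℕ} (hp : p ⊆ range 6) :
    insert x p ∈ (ofTrace n q).edges ↔ #p = 2 ∧ q p := by
  rw [mem_Ico] at hx
  have hxR : x ∉ range 6 := by simp only [mem_range]; omega
  have hpn : p ⊆ range n := hp.trans (range_subset_range.mpr (by omega))
  rw [mem_ofTrace_edges, inter_range_of_insert hxR hp, card_insert_of_notMem fun h => hxR (hp h),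
    insert_subset_iff]
  simp only [mem_range.mpr hx.2, hpn, true_and]
  exact and_congr_left' (by omega)

theorem inside_ofTrace [DecidablePred q] (hn : 6 ≤ n) :
    inside (ofTrace n q) = (powersetCard 3 (range 6)).filter q := by
  ext t
  simp only [inside, mem_filter, mem_powersetCard]
  constructor
  · rintro ⟨ht, htR⟩
    exact ⟨⟨htR, ((mem_ofTrace_edges_of_subset_range hn htR).mp ht).1⟩,
      ((mem_ofTrace_edges_of_subset_range hn htR).mp ht).2⟩
  · rintro ⟨⟨htR, ht3⟩, hq⟩
    exact ⟨(mem_ofTrace_edges_of_subset_range hn htR).mpr ⟨ht3, hq⟩, htR⟩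

theorem link_ofTrace [DecidablePred q] {x : ℕ} (hx : x ∈ Ico 6 n) :
    link (ofTrace n q) x = (powersetCard 2 (range 6)).filter q := by
  ext p
  simp only [link, mem_filter, mem_powersetCard]
  constructor
  · rintro ⟨⟨hpR, hp2⟩, hp⟩
    exact ⟨⟨hpR, hp2⟩, ((insert_mem_ofTrace_edges hx hpR).mp hp).2⟩
  · rintro ⟨⟨hpR, hp2⟩, hq⟩
    exact ⟨⟨hpR, hp2⟩, (insert_mem_ofTrace_edges hx hpR).mpr ⟨hp2, hq⟩⟩

theorem card_edges_ofTrace [DecidablePred q] (hn : 6 ≤ n)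
    (h2 : ∀ s ∈ (range 6).powerset, q s → 2 ≤ #s) :
    #(ofTrace n q).edges = #((powersetCard 3 (range 6)).filter q) +
      (n - 6) * #((powersetCard 2 (range 6)).filter q) := by
  have htrace : ∀ e ∈ (ofTrace n q).edges, 2 ≤ #(e ∩ range 6) := fun e he =>
    h2 _ (mem_powerset.mpr inter_subset_right) (mem_ofTrace_edges.mp he).2.2
  rw [card_edges_eq_card_inside_add_sum_link rfl htrace, inside_ofTrace hn,
    sum_congr rfl fun x hx => congrArg card (link_ofTrace hx), sum_const, Nat.card_Ico,
    smul_eq_mul]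

theorem image_range_eq_of_fixed {σ : Equiv.Perm ℕ} (hσ : ∀ m, 6 ≤ m → σ m = m) {k : ℕ}
    (hk : 6 ≤ k) : (range k).image σ = range k := by
  refine eq_of_subset_of_card_le (fun z hz => ?_) (by rw [card_image_of_injective _ σ.injective])
  obtain ⟨m, hm, rfl⟩ := mem_image.mp hz
  rw [mem_range] at hm ⊢
  by_cases h6 : 6 ≤ m
  · rwa [hσ m h6]
  · by_contra hσm
    have := σ.injective (hσ (σ m) (by omega))
    omega

theorem iso_ofTrace (hn : 6 ≤ n) (σ : Equiv.Perm ℕ) (hσ : ∀ m, 6 ≤ m → σ m = m)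
    (h : ∀ s ∈ (range 6).powerset, #s ≤ 3 → (q s ↔ q' (s.image σ))) :
    Iso (ofTrace n q) (ofTrace n q') := by
  have himage : ∀ e, e.image σ ∈ (ofTrace n q').edges ↔ e ∈ (ofTrace n q).edges := fun e => by
    have htrace : e.image σ ∩ range 6 = (e ∩ range 6).image σ := by
      rw [image_inter _ _ σ.injective, image_range_eq_of_fixed hσ le_rfl]
    have hsub : e.image σ ⊆ range n ↔ e ⊆ range n := by
      conv_lhs => rw [← image_range_eq_of_fixed hσ hn]
      exact image_subset_image_iff σ.injective
    rw [mem_ofTrace_edges, mem_ofTrace_edges, htrace, hsub, card_image_of_injective _ σ.injective]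
    refine and_congr_right fun _ => and_congr_right fun he => ?_
    refine (h _ (mem_powerset.mpr inter_subset_right) ?_).symm
    exact (card_le_card inter_subset_left).trans he.le
  refine ⟨σ, σ.injective.injOn, image_range_eq_of_fixed hσ hn, Finset.ext fun g => ?_⟩
  rw [mem_image]
  constructor
  · rintro ⟨e, he, rfl⟩
    exact (himage e).mpr he
  · intro hg
    refine ⟨g.image σ.symm, (himage _).mp ?_, ?_⟩ <;> rw [image_image, σ.self_comp_symm, image_id]
    exact hg

theorem connected_ofTrace (hn : 6 ≤ n) {c : ℕ}
    (hc : ∀ u ∈ range 6, u ≠ c → ∃ t ∈ powersetCard 3 (range 6), q t ∧ u ∈ t ∧ c ∈ t)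
    (hp : ∃ p ∈ powersetCard 2 (range 6), q p ∧ c ∈ p) : Connected (ofTrace n q) := by
  refine connected_of_adj_hub c fun u hu huc => ?_
  by_cases hu6 : u < 6
  · obtain ⟨t, ht, hqt, hut, hct⟩ := hc u (mem_range.mpr hu6) huc
    rw [mem_powersetCard] at ht
    exact ⟨t, (mem_ofTrace_edges_of_subset_range hn ht.1).mpr ⟨ht.2, hqt⟩, hut, hct⟩
  · obtain ⟨p, hp, hqp, hcp⟩ := hp
    rw [mem_powersetCard] at hp
    have hu : u ∈ Ico 6 n := mem_Ico.mpr ⟨by omega, mem_range.mp hu⟩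
    exact ⟨insert u p, (insert_mem_ofTrace_edges hu hp.1).mpr ⟨hp.2, hqp⟩, mem_insert_self u p,
      mem_insert_of_mem hcp⟩

theorem not_hasCopy_pathP_ofTrace
    (h : ∀ s ∈ (range 6).powerset, ∀ t ∈ (range 6).powerset, q s → q t → ¬ Disjoint s t) :
    ¬ HasCopy pathP (ofTrace n q) := fun hc => by
  obtain ⟨e₁, h₁, e₂, h₂, hd⟩ := hc.exists_disjoint_edges
  exact h _ (mem_powerset.mpr inter_subset_right) _ (mem_powerset.mpr inter_subset_right)
    (mem_ofTrace_edges.mp h₁).2.2 (mem_ofTrace_edges.mp h₂).2.2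
    (hd.mono inter_subset_left inter_subset_left)

theorem hasCopy_triC_ofTrace (hn : 6 ≤ n) (f : ℕ → ℕ) (hf : (range 6).image f = range 6)
    (h : ∀ t ∈ triangle, q (t.image f)) : HasCopy triC (ofTrace n q) := by
  have hinj : Set.InjOn f (range 6) := card_image_iff.mp (by rw [hf])
  refine ⟨f, hinj, fun v hv => ?_, fun e he => ?_⟩
  · have hfv : f v ∈ (range 6).image f := mem_image_of_mem f hv
    rw [hf] at hfv
    exact range_subset_range.mpr hn hfv
  · have he3 := triC.card3 e he
    rw [triC_edges] at he
    have heR := subset_range_of_mem_triangle e he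
    rw [mem_ofTrace_edges_of_subset_range hn (hf ▸ image_subset_image heR),
      card_image_of_injOn (hinj.mono (by exact_mod_cast heR))]
    exact ⟨he3, h e he⟩

end OfTrace

def compl6 (t : Finset ℕ) : Finset ℕ := range 6 \ t

def Bridged (p t : Finset ℕ) : Prop :=
  Disjoint p t ∧ ∃ r ∈ triangle, #(r ∩ p) = 1 ∧ #(r ∩ t) = 1

def Splits (p t : Finset ℕ) : Prop := #(p ∩ t) = 1 ∧ #(p ∩ compl6 t) = 1

instance (p t : Finset ℕ) : Decidable (Bridged p t) := by unfold Bridged; infer_instance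

instance (p t : Finset ℕ) : Decidable (Splits p t) := by unfold Splits; infer_instance

/-- The triples that can be edges inside the triangle next to a vertex `x` off it with link `L`:
each excluded `t` closes a loose path with `{x} ∪ p` for some `p ∈ L`. -/
def allowed (L : Finset (Finset ℕ)) : Finset (Finset ℕ) :=
  (powersetCard 3 (range 6)).filter fun t =>
    ∀ p ∈ L, ¬ Bridged p t ∧ ¬ (compl6 t ∈ triangle ∧ Splits p t)

/-- Complementary allowed triples `t`, `compl6 t` that are never both edges, since a pair of `L`
splitting them gives a loose path; `0 ∈ t` picks one triple of each such pair. -/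
def blocked (L : Finset (Finset ℕ)) : Finset (Finset ℕ) :=
  (allowed L).filter fun t => 0 ∈ t ∧ compl6 t ∈ allowed L ∧ ∃ p ∈ L, Splits p t

/-- The links of the vertices off the triangle in the extremal graphs: the three pairs of
degree-two vertices, or the three link pairs through one degree-two vertex. -/
abbrev extremalLinks : Finset (Finset (Finset ℕ)) :=
  {{{0,2}, {2,4}, {0,4}}, {{0,2}, {0,4}, {0,3}}, {{0,2}, {2,4}, {2,5}}, {{2,4}, {0,4}, {1,4}}}

set_option maxRecDepth 40000 in
theorem card_allowed_add_card_le : ∀ L ∈ linkPairs.powerset, L.Nonempty →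
    #(allowed L) + #L ≤ 13 + #(blocked L) ∧
    (#(allowed L) + #L = 13 + #(blocked L) → L ∈ extremalLinks ∧ blocked L = ∅) := by
  decide

theorem bridged_of_disjoint :
    ∀ p ∈ linkPairs, ∀ q ∈ linkPairs, Disjoint p q → Bridged p q := by decide

set_option maxRecDepth 40000 in
theorem card_le_three_of_intersecting : ∀ L ∈ linkPairs.powerset,
    (∀ p ∈ L, ∀ q ∈ L, ¬ Disjoint p q) → #L ≤ 3 := by decide

theorem disjoint_cross_of_disjoint_of_disjoint : ∀ p ∈ linkPairs, ∀ q ∈ linkPairs,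
    ∀ p' ∈ linkPairs, ∀ q' ∈ linkPairs, Disjoint p q → Disjoint p' q' →
    Disjoint p p' ∨ Disjoint p q' ∨ Disjoint q p' ∨ Disjoint q q' := by decide

theorem mem_of_forall_not_disjoint : ∀ L ∈ extremalLinks, ∀ p ∈ linkPairs,
    (∀ q ∈ L, ¬ Disjoint p q) → p ∈ L := by decide

theorem compl6_compl6 {t : Finset ℕ} (ht : t ⊆ range 6) : compl6 (compl6 t) = t :=
  Finset.sdiff_sdiff_eq_self ht

/-- `t ↦ if t ∈ ET then compl6 t else t` injects the blocked triples into the allowed triples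
missing from `ET`. -/
theorem card_add_card_blocked_le {L ET : Finset (Finset ℕ)} (hET : ET ⊆ allowed L)
    (hsplit : ∀ p ∈ L, ∀ t ∈ ET, compl6 t ∈ ET → ¬ Splits p t) :
    #ET + #(blocked L) ≤ #(allowed L) := by
  have hR : ∀ t ∈ allowed L, t ⊆ range 6 := fun t ht =>
    (mem_powersetCard.mp (mem_filter.mp ht).1).1
  have hmaps : ∀ t ∈ blocked L, (if t ∈ ET then compl6 t else t) ∈ allowed L \ ET := by
    intro t ht
    obtain ⟨htA, -, hcA, p, hp, hs⟩ := mem_filter.mp ht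
    split_ifs with htE
    · exact mem_sdiff.mpr ⟨hcA, fun hcE => hsplit p hp t htE hcE hs⟩
    · exact mem_sdiff.mpr ⟨htA, htE⟩
  have hinj : Set.InjOn (fun t => if t ∈ ET then compl6 t else t) (blocked L) := by
    intro t₁ h₁ t₂ h₂ h
    obtain ⟨hA₁, h0₁, -⟩ := mem_filter.mp h₁
    obtain ⟨hA₂, h0₂, -⟩ := mem_filter.mp h₂
    have h0 : ∀ t, 0 ∈ t → 0 ∉ compl6 t := fun t h0 h => (mem_sdiff.mp h).2 h0
    simp only at h
    split_ifs at h with hE₁ hE₂ hE₂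
    · rw [← compl6_compl6 (hR _ hA₁), h, compl6_compl6 (hR _ hA₂)]
    · exact absurd (h ▸ h0₂) (h0 t₁ h0₁)
    · exact absurd (h ▸ h0₁) (h0 t₂ h0₂)
    · exact h
  have := card_le_card_of_injOn _ hmaps hinj
  rw [card_sdiff_of_subset hET] at this
  have := card_le_card hET
  omega

theorem card_add_card_le_thirteen {L ET : Finset (Finset ℕ)} (hL : L ⊆ linkPairs)
    (hne : L.Nonempty) (hET : ET ⊆ allowed L)
    (hsplit : ∀ p ∈ L, ∀ t ∈ ET, compl6 t ∈ ET → ¬ Splits p t) :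
    #ET + #L ≤ 13 ∧ (#ET + #L = 13 → L ∈ extremalLinks ∧ ET = allowed L) := by
  have hb := card_add_card_blocked_le hET hsplit
  obtain ⟨hle, heq⟩ := card_allowed_add_card_le L (mem_powerset.mpr hL) hne
  refine ⟨by omega, fun h13 => ?_⟩
  obtain ⟨hL', hb0⟩ := heq (by omega)
  rw [hb0, card_empty] at hb hle
  exact ⟨hL', eq_of_subset_of_card_le hET (by omega)⟩

theorem card_eq_three_of_mem_extremalLinks : ∀ L ∈ extremalLinks, #L = 3 := by decide

theorem hasCopy_pathP_of_bridged (hT : triangle ⊆ K.edges) {e₁ e₃ : Finset ℕ}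
    (h₁ : e₁ ∈ K.edges) (h₃ : e₃ ∈ K.edges) (hd : Disjoint e₁ e₃)
    (hb : Bridged (e₁ ∩ range 6) (e₃ ∩ range 6)) : HasCopy pathP K := by
  obtain ⟨-, r, hr, hr₁, hr₃⟩ := hb
  have hrR := subset_range_of_mem_triangle r hr
  rw [inter_comm, inter_range_inter hrR] at hr₁
  rw [inter_comm, inter_range_inter hrR, inter_comm] at hr₃
  exact hasCopy_pathP h₁ (hT hr) h₃ hr₁ hr₃ hd

section Links

variable {n : ℕ} {x y : ℕ} {p t : Finset ℕ}

theorem subset_range_of_mem_link (hp : p ∈ link K x) : p ⊆ range 6 :=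
  (mem_powersetCard.mp (mem_filter.mp hp).1).1

theorem insert_mem_edges_of_mem_link (hp : p ∈ link K x) : insert x p ∈ K.edges :=
  (mem_filter.mp hp).2

theorem link_subset_linkPairs (hT : triangle ⊆ K.edges) (hP : ¬ HasCopy pathP K)
    (hx : x ∉ range 6) : link K x ⊆ linkPairs := fun p hp => by
  have hpR := subset_range_of_mem_link hp
  have h := inter_range_mem_linkPairs hT hP (insert_mem_edges_of_mem_link hp)
    (by rw [inter_range_of_insert hx hpR]; exact (mem_powersetCard.mp (mem_filter.mp hp).1).2)
  rwa [inter_range_of_insert hx hpR] at h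

theorem not_splits (hP : ¬ HasCopy pathP K) (hx : x ∉ range 6) (hp : p ∈ link K x)
    (ht : t ∈ inside K) (hct : compl6 t ∈ K.edges) : ¬ Splits p t := fun ⟨h₁, h₂⟩ => by
  obtain ⟨hte, htR⟩ := mem_filter.mp ht
  refine hP (hasCopy_pathP hte (insert_mem_edges_of_mem_link hp) hct ?_ ?_ disjoint_sdiff)
  · rwa [inter_comm, insert_inter_of_notMem fun h => hx (htR h)]
  · rwa [compl6, insert_inter_of_notMem fun h => hx (mem_sdiff.mp h).1]

theorem inside_subset_allowed (hT : triangle ⊆ K.edges) (hP : ¬ HasCopy pathP K)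
    (hx : x ∉ range 6) : inside K ⊆ allowed (link K x) := fun t ht => by
  obtain ⟨hte, htR⟩ := mem_filter.mp ht
  refine mem_filter.mpr ⟨mem_powersetCard.mpr ⟨htR, K.card3 t hte⟩, fun p hp => ⟨fun hb => ?_,
    fun ⟨hc, hs⟩ => not_splits hP hx hp ht (hT hc) hs⟩⟩
  refine hP (hasCopy_pathP_of_bridged hT (insert_mem_edges_of_mem_link hp) hte
    (disjoint_insert_left.mpr ⟨fun h => hx (htR h), hb.1⟩) ?_)
  rwa [inter_range_of_insert hx (subset_range_of_mem_link hp), inter_eq_left.mpr htR]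

theorem not_disjoint_of_mem_link (hT : triangle ⊆ K.edges) (hP : ¬ HasCopy pathP K)
    (hx : x ∉ range 6) (hy : y ∉ range 6) (hxy : x ≠ y) {q : Finset ℕ} (hp : p ∈ link K x)
    (hq : q ∈ link K y) : ¬ Disjoint p q := fun hd => by
  have hpR := subset_range_of_mem_link hp
  have hqR := subset_range_of_mem_link hq
  refine hP (hasCopy_pathP_of_bridged hT (insert_mem_edges_of_mem_link hp)
    (insert_mem_edges_of_mem_link hq) ?_ ?_)
  · refine disjoint_insert_left.mpr ⟨fun h => ?_, disjoint_insert_right.mpr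
      ⟨fun h => hy (hpR h), hd⟩⟩
    rcases mem_insert.mp h with h | h
    exacts [hxy h, hx (hqR h)]
  · rw [inter_range_of_insert hx hpR, inter_range_of_insert hy hqR]
    exact bridged_of_disjoint p (link_subset_linkPairs hT hP hx hp) q
      (link_subset_linkPairs hT hP hy hq) hd

theorem intersecting_link_or_intersecting_link (hT : triangle ⊆ K.edges) (hP : ¬ HasCopy pathP K)
    (hx : x ∉ range 6) (hy : y ∉ range 6) (hxy : x ≠ y) :
    (link K x : Set (Finset ℕ)).Intersecting ∨ (link K y : Set (Finset ℕ)).Intersecting := by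
  by_contra! h
  simp only [Set.Intersecting, mem_coe, not_forall, not_not] at h
  obtain ⟨⟨p, hp, q, hq, hpq⟩, ⟨p', hp', q', hq', hpq'⟩⟩ := h
  have hL : ∀ {z}, z ∉ range 6 → link K z ⊆ linkPairs := link_subset_linkPairs hT hP
  have hcross : ∀ {a b}, a ∈ link K x → b ∈ link K y → ¬ Disjoint a b :=
    not_disjoint_of_mem_link hT hP hx hy hxy
  rcases disjoint_cross_of_disjoint_of_disjoint p (hL hx hp) q (hL hx hq) p' (hL hy hp') q'
    (hL hy hq') hpq hpq' with h | h | h | h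
  exacts [hcross hp hp' h, hcross hp hq' h, hcross hq hp' h, hcross hq hq' h]

theorem card_link_le_three (hT : triangle ⊆ K.edges) (hP : ¬ HasCopy pathP K)
    (hx : x ∉ range 6) (h : (link K x : Set (Finset ℕ)).Intersecting) : #(link K x) ≤ 3 :=
  card_le_three_of_intersecting _ (mem_powerset.mpr (link_subset_linkPairs hT hP hx))
    fun _ hp _ hq => h hp hq

theorem link_eq_of_mem_extremalLinks (hT : triangle ⊆ K.edges) (hP : ¬ HasCopy pathP K)
    (hx : x ∉ range 6) (hy : y ∉ range 6) (hxy : x ≠ y) (hL : link K x ∈ extremalLinks)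
    (h3 : #(link K y) = 3) : link K y = link K x := by
  refine eq_of_subset_of_card_le (fun p hp => ?_)
    (by rw [h3, card_eq_three_of_mem_extremalLinks _ hL])
  exact mem_of_forall_not_disjoint _ hL p (link_subset_linkPairs hT hP hy hp) fun q hq =>
    not_disjoint_of_mem_link hT hP hy hx hxy.symm hp hq

theorem link_nonempty (hKv : K.verts = range n) (hT : triangle ⊆ K.edges)
    (hP : ¬ HasCopy pathP K) (hconn : Connected K) (hx : x ∈ Ico 6 n) : (link K x).Nonempty := by
  rw [mem_Ico] at hx
  have h0 : 0 ∈ K.verts := K.sub _ (hT (by decide : {0,1,2} ∈ triangle)) (by decide)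
  rcases (hconn x (hKv ▸ mem_range.mpr hx.2) 0 h0).cases_head with h | ⟨c, ⟨m, hm, hxm, -⟩, -⟩
  · omega
  have hm' : m ∈ K.edges.filter (¬ · ⊆ range 6) :=
    mem_filter.mpr ⟨hm, fun h => by have := mem_range.mp (h hxm); omega⟩
  rw [filter_not_subset_range_edges hKv fun e he => two_le_card_inter_range hT hP hconn he]
    at hm'
  obtain ⟨y, -, p, hp, rfl⟩ : ∃ y ∈ Ico 6 n, ∃ p ∈ link K y, insert y p = m := by
    simpa only [mem_biUnion, mem_image] using hm'
  rcases mem_insert.mp hxm with rfl | hxp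
  · exact ⟨p, hp⟩
  · have := mem_range.mp (subset_range_of_mem_link hp hxp)
    omega

end Links

section Bound

variable {n : ℕ}

theorem exists_forall_ne_intersecting_link (hT : triangle ⊆ K.edges) (hP : ¬ HasCopy pathP K)
    (hn : 7 ≤ n) : ∃ x₀ ∈ Ico 6 n,
      ∀ y ∈ Ico 6 n, y ≠ x₀ → (link K y : Set (Finset ℕ)).Intersecting := by
  have hout : ∀ x ∈ Ico 6 n, x ∉ range 6 := fun x hx => by
    simp only [mem_Ico, mem_range] at hx ⊢; omega
  by_cases h : ∃ x ∈ Ico 6 n, ¬ (link K x : Set (Finset ℕ)).Intersecting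
  · obtain ⟨x, hx, hnx⟩ := h
    refine ⟨x, hx, fun y hy hyx => ?_⟩
    exact (intersecting_link_or_intersecting_link hT hP (hout x hx) (hout y hy)
      hyx.symm).resolve_left hnx
  · push Not at h
    exact ⟨6, mem_Ico.mpr ⟨le_rfl, by omega⟩, fun y hy _ => h y hy⟩

/-- The bound `3n - 8 = 13 + 3 (n - 7)`: one vertex `x₀` off the triangle contributes at most
`13` together with the inside edges, every other one at most `3`. -/
theorem card_edges_le_and_extremal (hKv : K.verts = range n) (hT : triangle ⊆ K.edges)
    (hP : ¬ HasCopy pathP K) (hconn : Connected K) (hn : 7 ≤ n) :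
    #K.edges ≤ 3 * n - 8 ∧ (#K.edges = 3 * n - 8 →
      ∃ L ∈ extremalLinks, K = ofTrace n fun s => s ∈ allowed L ∨ s ∈ L) := by
  have hout : ∀ x ∈ Ico 6 n, x ∉ range 6 := fun x hx => by
    simp only [mem_Ico, mem_range] at hx ⊢; omega
  have h2 : ∀ e ∈ K.edges, 2 ≤ #(e ∩ range 6) := fun e he =>
    two_le_card_inter_range hT hP hconn he
  obtain ⟨x₀, hx₀, hint⟩ := exists_forall_ne_intersecting_link hT hP hn
  obtain ⟨hloc, hloc_eq⟩ := card_add_card_le_thirteen (link_subset_linkPairs hT hP (hout x₀ hx₀))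
    (link_nonempty hKv hT hP hconn hx₀) (inside_subset_allowed hT hP (hout x₀ hx₀))
    fun p hp t ht hct => not_splits hP (hout x₀ hx₀) hp ht (mem_filter.mp hct).1
  have hrest : ∀ y ∈ (Ico 6 n).erase x₀, #(link K y) ≤ 3 := fun y hy =>
    card_link_le_three hT hP (hout y (mem_of_mem_erase hy))
      (hint y (mem_of_mem_erase hy) (ne_of_mem_erase hy))
  have hsum := sum_le_sum hrest
  have hcard : #((Ico 6 n).erase x₀) = n - 7 := by
    rw [card_erase_of_mem hx₀, Nat.card_Ico]; omega
  rw [sum_const, hcard, smul_eq_mul] at hsum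
  rw [card_edges_eq_card_inside_add_sum_link hKv h2, ← add_sum_erase _ _ hx₀]
  refine ⟨by omega, fun heq => ?_⟩
  obtain ⟨hL, hinside⟩ := hloc_eq (by omega)
  have h3 : ∀ y ∈ (Ico 6 n).erase x₀, #(link K y) = 3 := (sum_eq_sum_iff_of_le hrest).mp
    (by rw [sum_const, hcard, smul_eq_mul]; omega)
  refine ⟨link K x₀, hL, ?_⟩
  rw [← hinside]
  refine eq_ofTrace_of_link_eq hKv h2 hx₀ fun y hy => ?_
  by_cases hyx : y = x₀
  · rw [hyx]
  · exact link_eq_of_mem_extremalLinks hT hP (hout x₀ hx₀) (hout y hy) (Ne.symm hyx) hL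
      (h3 y (mem_erase.mpr ⟨hyx, hy⟩))

end Bound

def IsG1Trace (s : Finset ℕ) : Prop := s = {0,1,2} ∨ (3 ∈ s ∧ (s ∩ {0,1,2}).Nonempty)

def IsG2Trace (s : Finset ℕ) : Prop := s = {0,1,2} ∨ #(s ∩ {0,1,2}) = 2

instance : DecidablePred IsG1Trace := fun s => by unfold IsG1Trace; infer_instance

instance : DecidablePred IsG2Trace := fun s => by unfold IsG2Trace; infer_instance

theorem eq_iff_inter_range_eq {e s : Finset ℕ} (he : #e = 3) (hs : s ⊆ range 6) (hs3 : #s = 3) :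
    e = s ↔ e ∩ range 6 = s := by
  constructor
  · rintro rfl
    exact inter_eq_left.mpr hs
  intro h
  rw [← h]
  exact (eq_of_subset_of_card_le inter_subset_left (by rw [h, hs3, he])).symm

theorem G1_eq_ofTrace (n : ℕ) : G1 n = ofTrace n IsG1Trace := by
  refine ThreeGraph.ext rfl (Finset.ext fun e => ?_)
  rw [G1, mem_mk3_edges, mem_ofTrace_edges]
  refine and_congr_right fun _ => and_congr_right fun he => ?_
  rw [IsG1Trace, eq_iff_inter_range_eq he (by decide) (by decide),
    inter_range_inter (by decide : ({0,1,2} : Finset ℕ) ⊆ range 6)]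
  simp [mem_inter]

theorem G2_eq_ofTrace (n : ℕ) : G2 n = ofTrace n IsG2Trace := by
  refine ThreeGraph.ext rfl (Finset.ext fun e => ?_)
  rw [G2, mem_mk3_edges, mem_ofTrace_edges]
  refine and_congr_right fun _ => and_congr_right fun he => ?_
  rw [IsG2Trace, eq_iff_inter_range_eq he (by decide) (by decide),
    inter_range_inter (by decide : ({0,1,2} : Finset ℕ) ⊆ range 6)]

set_option maxRecDepth 40000 in
theorem iso_G1_or_iso_G2 {n : ℕ} (hn : 6 ≤ n) : ∀ L ∈ extremalLinks,
    Iso (ofTrace n fun s => s ∈ allowed L ∨ s ∈ L) (G1 n) ∨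
      Iso (ofTrace n fun s => s ∈ allowed L ∨ s ∈ L) (G2 n) := by
  have hfix : ∀ a b m, 6 ≤ m → a < 6 → b < 6 → Equiv.swap a b m = m := fun a b m hm ha hb =>
    Equiv.swap_apply_of_ne_of_ne (by omega) (by omega)
  simp only [mem_insert, mem_singleton, forall_eq_or_imp, forall_eq, G1_eq_ofTrace,
    G2_eq_ofTrace]
  refine ⟨.inr (iso_ofTrace hn (Equiv.swap 1 4) (fun m hm => hfix 1 4 m hm (by omega) (by omega))
    (by decide)), .inl (iso_ofTrace hn ((Equiv.swap 0 3).trans (Equiv.swap 1 4)) (fun m hm => ?_)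
    (by decide)), .inl (iso_ofTrace hn ((Equiv.swap 2 3).trans ((Equiv.swap 2 5).trans
    (Equiv.swap 1 4))) (fun m hm => ?_) (by decide)),
    .inl (iso_ofTrace hn (Equiv.swap 3 4) (fun m hm => hfix 3 4 m hm (by omega) (by omega))
    (by decide))⟩
  · simp only [Equiv.trans_apply, hfix _ _ m hm (by omega : 0 < 6) (by omega : 3 < 6),
      hfix _ _ m hm (by omega : 1 < 6) (by omega : 4 < 6)]
  · simp only [Equiv.trans_apply, hfix _ _ m hm (by omega : 2 < 6) (by omega : 3 < 6),
      hfix _ _ m hm (by omega : 2 < 6) (by omega : 5 < 6),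
      hfix _ _ m hm (by omega : 1 < 6) (by omega : 4 < 6)]

section Extremal

variable {n : ℕ} (hn : 6 ≤ n)
include hn

theorem card_edges_G1 : #(G1 n).edges = 3 * n - 8 := by
  rw [G1_eq_ofTrace, card_edges_ofTrace hn (by decide),
    (by decide : #((powersetCard 3 (range 6)).filter IsG1Trace) = 10),
    (by decide : #((powersetCard 2 (range 6)).filter IsG1Trace) = 3)]
  omega

theorem card_edges_G2 : #(G2 n).edges = 3 * n - 8 := by
  rw [G2_eq_ofTrace, card_edges_ofTrace hn (by decide),
    (by decide : #((powersetCard 3 (range 6)).filter IsG2Trace) = 10),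
    (by decide : #((powersetCard 2 (range 6)).filter IsG2Trace) = 3)]
  omega

theorem connected_G1 : Connected (G1 n) :=
  G1_eq_ofTrace n ▸ connected_ofTrace hn (c := 3) (by decide) (by decide)

theorem connected_G2 : Connected (G2 n) :=
  G2_eq_ofTrace n ▸ connected_ofTrace hn (c := 0) (by decide) (by decide)

theorem hasCopy_triC_G1 : HasCopy triC (G1 n) :=
  G1_eq_ofTrace n ▸ hasCopy_triC_ofTrace hn (fun m => [1, 2, 0, 4, 3, 5].getD m 0) (by decide)
    (by decide)

theorem hasCopy_triC_G2 : HasCopy triC (G2 n) :=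
  G2_eq_ofTrace n ▸ hasCopy_triC_ofTrace hn (fun m => [0, 3, 1, 4, 2, 5].getD m 0) (by decide)
    (by decide)

end Extremal

set_option maxRecDepth 10000 in
theorem not_hasCopy_pathP_G1 (n : ℕ) : ¬ HasCopy pathP (G1 n) :=
  G1_eq_ofTrace n ▸ not_hasCopy_pathP_ofTrace (by decide)

set_option maxRecDepth 10000 in
theorem not_hasCopy_pathP_G2 (n : ℕ) : ¬ HasCopy pathP (G2 n) :=
  G2_eq_ofTrace n ▸ not_hasCopy_pathP_ofTrace (by decide)

theorem card_edges_le_and_iso_of_eq {n : ℕ} (hn : 7 ≤ n) (hV : #H.verts = n)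
    (hP : ¬ HasCopy pathP H) (hconn : Connected H) (hC : HasCopy triC H) :
    #H.edges ≤ 3 * n - 8 ∧ (#H.edges = 3 * n - 8 → Iso H (G1 n) ∨ Iso H (G2 n)) := by
  obtain ⟨K, hHK, hKv, hT⟩ := exists_iso_triangle_subset hV hC
  obtain ⟨hle, heq⟩ := card_edges_le_and_extremal hKv hT (fun h => hP (h.of_iso hHK.symm))
    (hconn.of_iso hHK) hn
  rw [hHK.card_edges_eq]
  refine ⟨hle, fun h => ?_⟩
  obtain ⟨L, hL, rfl⟩ := heq h
  exact (iso_G1_or_iso_G2 (by omega) L hL).imp hHK.trans hHK.trans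

end ThreeGraph

open ThreeGraph

/-- `ex_conn(n;P|C) = 3n − 8` and `Ex_conn(n;P|C) = {G₁(n), G₂(n)}`
for `n ≥ 7`. -/
theorem conn_conditional_turan_P_C (n : ℕ) (hn : 7 ≤ n) :
    (∀ H : ThreeGraph, H.verts.card = n → ¬ HasCopy pathP H → Connected H →
      HasCopy triC H → H.edges.card ≤ 3 * n - 8) ∧
    (∀ H : ThreeGraph, H.verts.card = n → ¬ HasCopy pathP H → Connected H →
      HasCopy triC H →
      (H.edges.card = 3 * n - 8 ↔ (Iso H (G1 n) ∨ Iso H (G2 n)))) ∧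
    ((G1 n).verts.card = n ∧ ¬ HasCopy pathP (G1 n) ∧ Connected (G1 n) ∧
      HasCopy triC (G1 n)) ∧
    ((G2 n).verts.card = n ∧ ¬ HasCopy pathP (G2 n) ∧ Connected (G2 n) ∧
      HasCopy triC (G2 n)) := by
  have h6 : 6 ≤ n := by omega
  refine ⟨fun H hV hP hconn hC => (card_edges_le_and_iso_of_eq hn hV hP hconn hC).1,
    fun H hV hP hconn hC => ⟨(card_edges_le_and_iso_of_eq hn hV hP hconn hC).2, ?_⟩,
    ⟨Finset.card_range n, not_hasCopy_pathP_G1 n, connected_G1 h6, hasCopy_triC_G1 h6⟩,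
    ⟨Finset.card_range n, not_hasCopy_pathP_G2 n, connected_G2 h6, hasCopy_triC_G2 h6⟩⟩
  rintro (h | h) <;> rw [h.card_edges_eq]
  exacts [card_edges_G1 h6, card_edges_G2 h6]
end

section
/- Setup: let H be an n-vertex {P,C}-free 3-graph on vertex set V containing a copy of P_2 ∪ K_3; let Q be a copy of P_2 in H such that at least one edge of H is disjoint from U := V(Q), and let x be the vertex of degree two in Q; put W = V ∖ U, let W_0 be the set of vertices of W lying in no edge of H[W] with s = |W_0| ≥ 1, let W_1 = W ∖ W_0, let H_1 be the set of edges of H intersecting both U and W_1, and let F^2_1 = {h ∈ H_1 : |(h ∩ U) ∖ {x}| = 2}. If F^2_1 ≠ ∅, then: |H[U ∪ W_0]| ≤ 8 for s = 1; |H[U ∪ W_0]| ≤ 3s + 7 for 2 ≤ s ≤ 4; and |H[U ∪ W_0]| ≤ binom(s+2,2) + 1 for s ≥ 5. -/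
/-!
Take `h ∈ F²₁`; it is `T ∪ {w}` with `T ⊆ U ∖ {x}` a pair and `w ∈ W₁`, so `w` lies on an edge
`g ⊆ W`, which misses `U ∪ W₀`. An edge `f` of `H[U ∪ W₀]` meeting `T` in a single vertex would
make `f, h, g` a copy of `P`. So every edge of `H[U ∪ W₀]` contains `T` or misses it, and `T`
lies in one edge `E = T ∪ {x}` of `Q`, the other being `E' = C ∪ {x}`. The edges containing `T`
are the `T ∪ {y}` with `y` in a set `Y ∋ x` of apexes; the others form a family `B` of triples
in `S = (U ∪ W₀) ∖ T`, all meeting `E'` since no edge lies inside `W₀`. By `P`-freeness again,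
an apex lying on two edges of `B` that share exactly one vertex is that vertex. Hence an edge of
`B` through `x` meets an edge of `B` avoiding `x` in zero or two vertices, the edges avoiding `x`
all contain `C`, and counting through the link of `x` gives
`|Y| + |B| ≤ max (3|S| - 2) (binom(|S| - 1, 2) + 1)` with `|S| = s + 3`. For `s = 1` the trivial
bound `|S| + binom(|S|, 3) = 8` is the better one.
-/

open Finset

theorem two_mul_choose_two_succ (n : ℕ) : 2 * (n + 1).choose 2 = (n + 1) * n := by
  rw [mul_comm, ← Nat.add_one_mul_choose_eq, Nat.choose_one_right]

theorem add_choose_two_sub_le {k m : ℕ} (hk : 1 ≤ k) (hkm : k ≤ m) (hm : 4 ≤ m) :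
    k + (m - k).choose 2 ≤ (m - 1).choose 2 + 1 := by
  obtain ⟨j, rfl⟩ := Nat.exists_eq_add_of_le hkm
  obtain ⟨k, rfl⟩ := Nat.exists_eq_add_of_le hk
  rw [Nat.add_sub_cancel_left, show 1 + k + j - 1 = k + j by omega]
  rcases j with _ | j
  · obtain ⟨a, rfl⟩ : ∃ a, k = a + 2 + 1 := ⟨k - 3, by omega⟩
    have := two_mul_choose_two_succ (a + 2)
    simp only [Nat.choose_zero_succ, add_zero] at this ⊢
    nlinarith
  · have h₁ := two_mul_choose_two_succ j
    have h₂ := two_mul_choose_two_succ (k + j)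
    rw [show k + (j + 1) = k + j + 1 by ring]
    nlinarith

theorem add_choose_two_sub_sub_le_max {t m : ℕ} (ht : 1 ≤ t) (htm : t + 3 ≤ m) :
    m + (3 + (m - 3 - t).choose 2) + t ≤ max (3 * m - 2) ((m - 1).choose 2 + 1) := by
  obtain ⟨j, rfl⟩ := Nat.exists_eq_add_of_le htm
  rw [show t + 3 + j - 3 - t = j by omega, show t + 3 + j - 1 = t + j + 1 + 1 by omega]
  rcases Nat.lt_or_ge (j.choose 2) (2 * j + t + 2) with h | h
  · exact le_max_of_le_left (by omega)
  refine le_max_of_le_right ?_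
  rcases j with _ | j
  · simp at h
  have h₁ := two_mul_choose_two_succ j
  have h₂ := two_mul_choose_two_succ (t + (j + 1) + 1)
  have hj : 2 ≤ j := by nlinarith
  nlinarith [Nat.mul_le_mul_right j ht]

theorem case_bounds_of_le_max_of_le_add_choose {s N : ℕ}
    (h₁ : N ≤ max (3 * (s + 3) - 2) ((s + 2).choose 2 + 1))
    (h₂ : N ≤ s + 3 + (s + 3).choose 3) :
    (s = 1 → N ≤ 8) ∧ (2 ≤ s → s ≤ 4 → N ≤ 3 * s + 7) ∧
      (5 ≤ s → N ≤ (s + 2).choose 2 + 1) := by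
  refine ⟨?_, ?_, fun h5 => ?_⟩
  · rintro rfl
    simpa using h₂
  · intro h2 h4
    interval_cases s <;> simp_all [Nat.choose]
  obtain ⟨a, rfl⟩ := Nat.exists_eq_add_of_le h5
  have := two_mul_choose_two_succ (5 + a + 1)
  refine h₁.trans (max_le ?_ le_rfl)
  rw [show 3 * (5 + a + 3) - 2 = 3 * a + 22 by omega, show 5 + a + 2 = 5 + a + 1 + 1 from rfl]
  nlinarith [Nat.zero_le (a * a)]

section Families

variable {α : Type*} [DecidableEq α]

theorem Finset.exists_third_of_card_eq_three {s : Finset α} {a b : α} (hs : s.card = 3)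
    (ha : a ∈ s) (hb : b ∈ s) (hab : a ≠ b) : ∃ d, s = {a, d, b} := by
  have hb' : b ∈ s.erase a := mem_erase.mpr ⟨hab.symm, hb⟩
  obtain ⟨d, hd⟩ := card_eq_one.mp (by
    rw [card_erase_of_mem hb', card_erase_of_mem ha, hs] : ((s.erase a).erase b).card = 1)
  refine ⟨d, ?_⟩
  rw [← insert_erase ha, ← insert_erase hb', hd]
  ext
  simp only [mem_insert, mem_singleton]
  tauto

theorem Finset.subset_or_disjoint_of_card_inter_ne_one {e g : Finset α} (he : e.card ≤ 2)
    (h : (e ∩ g).card ≠ 1) : e ⊆ g ∨ Disjoint e g := by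
  rcases Nat.lt_or_ge (e ∩ g).card 1 with h₀ | h₂
  · exact Or.inr (disjoint_iff_inter_eq_empty.mpr (card_eq_zero.mp (by omega)))
  refine Or.inl (inter_eq_left.mp (eq_of_subset_of_card_le inter_subset_left ?_))
  have := card_le_card (inter_subset_left : e ∩ g ⊆ e)
  omega

theorem Finset.mem_image_pair {S e : Finset α} {a : α} (he : e.card = 2) (ha : a ∈ e)
    (heS : e ⊆ S) : e ∈ (S.erase a).image fun v => {a, v} := by
  obtain ⟨v, hv⟩ := card_eq_one.mp (by rw [card_erase_of_mem ha, he] : (e.erase a).card = 1)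
  have hve : v ∈ e.erase a := hv ▸ mem_singleton_self v
  exact mem_image.mpr ⟨v, erase_subset_erase a heS hve, by rw [← hv, insert_erase ha]⟩

theorem Finset.inter_nonempty_of_inter_union_nonempty {f T E : Finset α} {x : α} (hx : x ∈ E)
    (hfT : Disjoint f T) (h : (f ∩ (insert x T ∪ E)).Nonempty) : (f ∩ E).Nonempty := by
  obtain ⟨v, hv⟩ := h
  rw [mem_inter, mem_union, mem_insert] at hv
  obtain ⟨hvf, (rfl | hvT) | hvE⟩ := hv
  exacts [⟨v, mem_inter.mpr ⟨hvf, hx⟩⟩, absurd hvT (disjoint_left.mp hfT hvf),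
    ⟨v, mem_inter.mpr ⟨hvf, hvE⟩⟩]

def apexes (B : Finset (Finset α)) (V T : Finset α) : Finset α :=
  (V \ T).filter fun y => insert y T ∈ B

theorem mem_apexes {B : Finset (Finset α)} {V T : Finset α} {y : α} :
    y ∈ apexes B V T ↔ (y ∈ V ∧ y ∉ T) ∧ insert y T ∈ B := by
  rw [apexes, mem_filter, mem_sdiff]

theorem card_le_card_apexes_add_card_filter_disjoint {𝓕 : Finset (Finset α)} {V T : Finset α}
    (h𝓕 : ∀ f ∈ 𝓕, f ⊆ V ∧ f.card = T.card + 1) (hsplit : ∀ f ∈ 𝓕, T ⊆ f ∨ Disjoint f T) :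
    𝓕.card ≤ (apexes 𝓕 V T).card + (𝓕.filter (Disjoint · T)).card := by
  rw [← card_filter_add_card_filter_not (s := 𝓕) (p := fun f => Disjoint f T), add_comm]
  refine Nat.add_le_add_right ((card_le_card fun f hf => ?_).trans
    (card_image_le (f := fun y => insert y T))) _
  obtain ⟨hf, hfT⟩ := mem_filter.mp hf
  obtain ⟨y, hyT, rfl⟩ := exists_eq_insert_iff.mpr
    ⟨(hsplit f hf).resolve_right hfT, (h𝓕 f hf).2.symm⟩
  exact mem_image.mpr ⟨y, mem_apexes.mpr ⟨⟨(h𝓕 _ hf).1 (mem_insert_self y T), hyT⟩, hf⟩, rfl⟩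

def link (B : Finset (Finset α)) (S : Finset α) (x : α) : Finset (Finset α) :=
  ((S.erase x).powersetCard 2).filter fun e => insert x e ∈ B

theorem mem_link {B : Finset (Finset α)} {S e : Finset α} {x : α} :
    e ∈ link B S x ↔ (e ⊆ S.erase x ∧ e.card = 2) ∧ insert x e ∈ B := by
  rw [link, mem_filter, mem_powersetCard]

theorem card_le_card_link_add_card_apexes {B : Finset (Finset α)} {S C : Finset α} {x : α}
    (hBS : ∀ f ∈ B, f ⊆ S ∧ f.card = 3) (hC : C.card = 2) (hCsub : ∀ g ∈ B, x ∉ g → C ⊆ g) :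
    B.card ≤ (link B S x).card + (apexes B (S.erase x) C).card := by
  refine (card_le_card fun f hf => ?_).trans ((card_union_le _ _).trans
    (add_le_add (card_image_le (f := insert x)) (card_image_le (f := fun t => insert t C))))
  by_cases hxf : x ∈ f
  · refine mem_union_left _ (mem_image.mpr ⟨f.erase x, mem_link.mpr
      ⟨⟨erase_subset_erase x (hBS f hf).1, ?_⟩, ?_⟩, insert_erase hxf⟩)
    · rw [card_erase_of_mem hxf, (hBS f hf).2]
    · rwa [insert_erase hxf]
  obtain ⟨t, htC, rfl⟩ := exists_eq_insert_iff.mpr ⟨hCsub f hf hxf, by rw [hC, (hBS f hf).2]⟩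
  refine mem_union_right _ (mem_image.mpr ⟨t, mem_apexes.mpr ⟨⟨mem_erase.mpr
    ⟨fun h => hxf (h ▸ mem_insert_self t C), (hBS _ hf).1 (mem_insert_self t C)⟩, htC⟩, hf⟩, rfl⟩)

theorem card_link_le_of_forall_inter_nonempty {B : Finset (Finset α)} {S C : Finset α} {x : α}
    (hC : C.card = 2) (hCS : C ⊆ S) (h : ∀ e ∈ link B S x, (e ∩ C).Nonempty) :
    (link B S x).card ≤ 2 * (S.card - 1) := by
  obtain ⟨a, b, -, rfl⟩ := card_eq_two.mp hC
  have hsub : link B S x ⊆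
      (S.erase a).image (fun v => {a, v}) ∪ (S.erase b).image (fun v => {b, v}) := by
    intro e he
    obtain ⟨⟨heS, he2⟩, -⟩ := mem_link.mp he
    obtain ⟨v, hv⟩ := h e he
    rw [mem_inter, mem_insert, mem_singleton] at hv
    rcases hv with ⟨hve, rfl | rfl⟩
    · exact mem_union_left _ (mem_image_pair he2 hve (heS.trans (erase_subset x S)))
    · exact mem_union_right _ (mem_image_pair he2 hve (heS.trans (erase_subset x S)))
  calc (link B S x).card ≤ _ := card_le_card hsub
    _ ≤ _ := card_union_le _ _
    _ ≤ (S.erase a).card + (S.erase b).card := add_le_add card_image_le card_image_le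
    _ = 2 * (S.card - 1) := by
      rw [card_erase_of_mem (hCS (mem_insert_self a _)),
        card_erase_of_mem (hCS (mem_insert_of_mem (mem_singleton_self b)))]
      ring

def AvoidsLoosePairs (B : Finset (Finset α)) (Y : Finset α) : Prop :=
  ∀ f₁ ∈ B, ∀ f₂ ∈ B, ∀ p, f₁ ∩ f₂ = {p} → ∀ y ∈ Y, y ∈ f₁ → y = p

namespace AvoidsLoosePairs

variable {B : Finset (Finset α)} {S Y C e₀ e₁ e₂ f g : Finset α} {x y : α}

theorem card_inter_ne_one (hB : AvoidsLoosePairs B Y) (hxY : x ∈ Y) (hf : f ∈ B) (hxf : x ∈ f)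
    (hg : g ∈ B) (hxg : x ∉ g) : (f ∩ g).card ≠ 1 := by
  intro h
  obtain ⟨p, hp⟩ := card_eq_one.mp h
  obtain rfl := hB f hf g hg p hp x hxY hxf
  exact hxg (mem_inter.mp (hp ▸ mem_singleton_self x)).2

theorem subset_of_notMem (hB : AvoidsLoosePairs B Y) (hxY : x ∈ Y) (hC : C.card = 2)
    (hCB : insert x C ∈ B) (hg : g ∈ B) (hxg : x ∉ g) (hmeet : (g ∩ insert x C).Nonempty) :
    C ⊆ g := by
  have h := hB.card_inter_ne_one hxY hCB (mem_insert_self x C) hg hxg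
  rw [insert_inter_of_notMem hxg] at h
  refine (subset_or_disjoint_of_card_inter_ne_one hC.le h).resolve_right fun hdisj => ?_
  rw [inter_insert_of_notMem hxg, inter_comm, disjoint_iff_inter_eq_empty.mp hdisj] at hmeet
  exact not_nonempty_empty hmeet

theorem notMem_of_disjoint (hB : AvoidsLoosePairs B Y) (he₁ : e₁ ∈ link B S x)
    (he₂ : e₂ ∈ link B S x) (h : Disjoint e₁ e₂) (hy : y ∈ Y) : y ∉ e₁ := by
  rw [mem_link] at he₁ he₂
  have hx : insert x e₁ ∩ insert x e₂ = {x} := by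
    rw [← insert_inter_distrib, disjoint_iff_inter_eq_empty.mp h, insert_empty]
  intro hye
  obtain rfl := hB _ he₁.2 _ he₂.2 x hx y hy (mem_insert_of_mem hye)
  exact notMem_erase y S (he₁.1.1 hye)

theorem card_link_le_of_mem_apexes (hB : AvoidsLoosePairs B Y) (hxY : x ∈ Y) (hxS : x ∈ S)
    (hC : C.card = 2) (hCS : C ⊆ S.erase x) {t : α} (ht : t ∈ apexes B (S.erase x) C) :
    (link B S x).card ≤ 3 + (S.card - 3 - (apexes B (S.erase x) C).card).choose 2 := by
  set A := apexes B (S.erase x) C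
  have hcross : ∀ e ∈ link B S x, ∀ u ∈ A, (e ∩ insert u C).card ≠ 1 := by
    intro e he u hu
    obtain ⟨⟨hux, -⟩, huB⟩ := mem_apexes.mp hu
    have hxu : x ∉ insert u C := by
      rw [mem_insert, not_or]
      exact ⟨fun h => (mem_erase.mp hux).1 h.symm, fun h => notMem_erase x S (hCS h)⟩
    rw [← insert_inter_of_notMem hxu]
    exact hB.card_inter_ne_one hxY (mem_link.mp he).2 (mem_insert_self x e) huB hxu
  have hsub : link B S x ⊆ (insert t C).powersetCard 2 ∪ ((S.erase x \ C) \ A).powersetCard 2 := by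
    intro e he
    obtain ⟨⟨heS, he2⟩, -⟩ := mem_link.mp he
    rcases subset_or_disjoint_of_card_inter_ne_one he2.le (hcross e he t ht) with h | h
    · exact mem_union_left _ (mem_powersetCard.mpr ⟨h, he2⟩)
    have hCe : Disjoint e C := h.mono_right (subset_insert t C)
    refine mem_union_right _ (mem_powersetCard.mpr ⟨fun v hv => ?_, he2⟩)
    refine mem_sdiff.mpr ⟨mem_sdiff.mpr ⟨heS hv, disjoint_left.mp hCe hv⟩, fun hv' => ?_⟩
    apply hcross e he v hv'
    rw [inter_insert_of_mem hv, disjoint_iff_inter_eq_empty.mp hCe, insert_empty, card_singleton]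
  have hA : A ⊆ S.erase x \ C := filter_subset _ _
  calc (link B S x).card ≤ _ := card_le_card hsub
    _ ≤ _ := card_union_le _ _
    _ = 3 + (S.card - 3 - A.card).choose 2 := by
      rw [card_powersetCard, card_powersetCard, card_insert_of_notMem (mem_apexes.mp ht).1.2, hC,
        card_sdiff_of_subset hA, card_sdiff_of_subset hCS, card_erase_of_mem hxS, hC]
      rfl

theorem card_link_le_of_disjoint (hB : AvoidsLoosePairs B Y) (hYS : Y ⊆ S)
    (hC : C ∈ link B S x) (he₀ : e₀ ∈ link B S x) (hdisj : Disjoint e₀ C) :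
    (link B S x).card ≤ (S.card - Y.card).choose 2 := by
  have hsub : link B S x ⊆ (S \ Y).powersetCard 2 := by
    intro e he
    obtain ⟨⟨heS, he2⟩, -⟩ := mem_link.mp he
    refine mem_powersetCard.mpr ⟨fun y hye => mem_sdiff.mpr ⟨(mem_erase.mp (heS hye)).2,
      fun hy => ?_⟩, he2⟩
    have hyC := hB.notMem_of_disjoint hC he₀ hdisj.symm hy
    have hye₀ := hB.notMem_of_disjoint he₀ hC hdisj hy
    obtain ⟨c, hc⟩ := not_disjoint_iff_nonempty_inter.mp
      fun h => hB.notMem_of_disjoint he hC h hy hye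
    obtain ⟨d, hd⟩ := not_disjoint_iff_nonempty_inter.mp
      fun h => hB.notMem_of_disjoint he he₀ h hy hye
    rw [mem_inter] at hc hd
    have h3 : ({y, c, d} : Finset α).card = 3 :=
      card_eq_three.mpr ⟨y, c, d, fun h => hyC (h ▸ hc.2), fun h => hye₀ (h ▸ hd.2),
        fun h => disjoint_left.mp hdisj hd.2 (h ▸ hc.2), rfl⟩
    have := card_le_card (insert_subset hye (insert_subset hc.1 (singleton_subset_iff.mpr hd.1)))
    omega
  calc (link B S x).card ≤ _ := card_le_card hsub
    _ = _ := by rw [card_powersetCard, card_sdiff_of_subset hYS]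

theorem card_add_card_le (hB : AvoidsLoosePairs B Y) (hBS : ∀ f ∈ B, f ⊆ S ∧ f.card = 3)
    (hYS : Y ⊆ S) (hxY : x ∈ Y) (hC : C.card = 2) (hxC : x ∉ C) (hCB : insert x C ∈ B)
    (hmeet : ∀ f ∈ B, (f ∩ insert x C).Nonempty) :
    Y.card + B.card ≤ max (3 * S.card - 2) ((S.card - 1).choose 2 + 1) := by
  set A := apexes B (S.erase x) C
  have hsplit : B.card ≤ (link B S x).card + A.card :=
    card_le_card_link_add_card_apexes hBS hC fun g hg hxg =>
      hB.subset_of_notMem hxY hC hCB hg hxg (hmeet g hg)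
  have hCS : insert x C ⊆ S := (hBS _ hCB).1
  have hCS' : C ⊆ S.erase x := fun c hc =>
    mem_erase.mpr ⟨fun h => hxC (h ▸ hc), hCS (mem_insert_of_mem hc)⟩
  have hxS : x ∈ S := hCS (mem_insert_self x C)
  have hY : Y.card ≤ S.card := card_le_card hYS
  have hY₁ : 1 ≤ Y.card := card_pos.mpr ⟨x, hxY⟩
  have hA : A.card + 3 ≤ S.card := by
    have hAS : A ⊆ S.erase x \ C := filter_subset _ _
    have := card_le_card hAS
    rw [card_sdiff_of_subset hCS', card_erase_of_mem hxS, hC] at this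
    have := card_le_card hCS
    rw [card_insert_of_notMem hxC, hC] at this
    omega
  -- Either some edge avoids `x`, or the link contains `C` and a pair disjoint from it (which
  -- keeps the link off `Y`), or every link pair meets `C`.
  rcases A.eq_empty_or_nonempty with hA₀ | ⟨t, ht⟩
  · rw [hA₀, card_empty, add_zero] at hsplit
    by_cases hCl : ∀ e ∈ link B S x, (e ∩ C).Nonempty
    · have := card_link_le_of_forall_inter_nonempty hC ((subset_insert x C).trans hCS) hCl
      exact le_max_of_le_left (by omega)
    obtain ⟨e₀, he₀, he₀C⟩ := not_forall₂.mp hCl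
    have hdisj : Disjoint e₀ C :=
      disjoint_iff_inter_eq_empty.mpr (not_nonempty_iff_eq_empty.mp he₀C)
    have hCl : C ∈ link B S x := mem_link.mpr ⟨⟨hCS', hC⟩, hCB⟩
    have := hB.card_link_le_of_disjoint hYS hCl he₀ hdisj
    have hS : 4 ≤ S.card := by
      obtain ⟨⟨he₀S, he₀2⟩, -⟩ := mem_link.mp he₀
      have := card_le_card (union_subset (he₀S.trans (erase_subset x S))
        ((subset_insert x C).trans hCS))
      rwa [card_union_of_disjoint hdisj, he₀2, hC] at this
    have := add_choose_two_sub_le hY₁ hY hS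
    exact le_max_of_le_right (by omega)
  have : (link B S x).card ≤ 3 + (S.card - 3 - A.card).choose 2 :=
    hB.card_link_le_of_mem_apexes hxY hxS hC hCS' ht
  calc Y.card + B.card ≤ S.card + (3 + (S.card - 3 - A.card).choose 2) + A.card := by omega
    _ ≤ _ := add_choose_two_sub_sub_le_max (card_pos.mpr ⟨t, ht⟩) (by omega)

end AvoidsLoosePairs

end Families

namespace ThreeGraph

variable {H : ThreeGraph}

theorem hasCopy_pathP_of_inter {f₁ f₂ f₃ : Finset ℕ} {c q : ℕ} (h₁ : f₁ ∈ H.edges)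
    (h₂ : f₂ ∈ H.edges) (h₃ : f₃ ∈ H.edges) (h₁₂ : f₁ ∩ f₂ = {c}) (h₂₃ : f₂ ∩ f₃ = {q})
    (h₁₃ : Disjoint f₁ f₃) : HasCopy pathP H := by
  have hc : c ∈ f₁ ∩ f₂ := h₁₂ ▸ mem_singleton_self c
  have hq : q ∈ f₂ ∩ f₃ := h₂₃ ▸ mem_singleton_self q
  rw [mem_inter] at hc hq
  have hcq : c ≠ q := fun h => disjoint_left.mp h₁₃ hc.1 (h ▸ hq.2)
  obtain ⟨a, ha, hac⟩ := exists_mem_ne (by rw [H.card3 _ h₁]; omega) c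
  obtain ⟨b, hf₁⟩ := exists_third_of_card_eq_three (H.card3 _ h₁) ha hc.1 hac
  obtain ⟨d, hf₂⟩ := exists_third_of_card_eq_three (H.card3 _ h₂) hc.2 hq.1 hcq
  obtain ⟨g, hg, hgq⟩ := exists_mem_ne (by rw [H.card3 _ h₃]; omega) q
  obtain ⟨e, hf₃⟩ := exists_third_of_card_eq_three (H.card3 _ h₃) hq.2 hg hgq.symm
  set φ : ℕ → ℕ := fun i => [a, b, c, d, q, e, g].getD i 0
  have himage : (range 7).image φ = f₁ ∪ f₂ ∪ f₃ := by
    rw [show range 7 = {0, 1, 2, 3, 4, 5, 6} by decide, hf₁, hf₂, hf₃]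
    simp only [image_insert, image_singleton]
    change ({a, b, c, d, q, e, g} : Finset ℕ) = _
    ext
    simp only [mem_insert, mem_singleton, mem_union]
    tauto
  have hcard : (f₁ ∪ f₂ ∪ f₃).card = 7 := by
    have h₁₂₃ : (f₁ ∪ f₂) ∩ f₃ = {q} := by
      rw [union_inter_distrib_right, disjoint_iff_inter_eq_empty.mp h₁₃, h₂₃, empty_union]
    have := card_union_add_card_inter f₁ f₂
    have := card_union_add_card_inter (f₁ ∪ f₂) f₃
    simp only [h₁₂, h₁₂₃, card_singleton, H.card3 _ h₁, H.card3 _ h₂, H.card3 _ h₃] at *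
    omega
  refine ⟨φ, injOn_of_card_image_eq (by rw [pathP, mk3, himage, hcard, card_range]),
    fun i hi => ?_, fun f hf => ?_⟩
  · have := himage ▸ mem_image_of_mem φ hi
    simp only [mem_union] at this
    rcases this with (h | h) | h
    exacts [H.sub _ h₁ h, H.sub _ h₂ h, H.sub _ h₃ h]
  · simp only [pathP, mk3, mem_filter] at hf
    rcases hf.2 with rfl | rfl | rfl
    · simpa [φ, ← hf₁]
    · simpa [φ, ← hf₂]
    · simpa [φ, ← hf₃]

theorem subset_or_disjoint_of_not_hasCopy (hP : ¬ HasCopy pathP H) {V T f g : Finset ℕ}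
    {w : ℕ} (hT : T.card = 2) (hTV : T ⊆ V) (hwT : insert w T ∈ H.edges) (hg : g ∈ H.edges)
    (hwg : w ∈ g) (hgV : Disjoint g V) (hf : f ∈ H.edges) (hfV : f ⊆ V) :
    T ⊆ f ∨ Disjoint f T := by
  have hTg : insert w T ∩ g = {w} := by
    rw [insert_inter_of_mem hwg, disjoint_iff_inter_eq_empty.mp (hgV.mono_right hTV).symm,
      insert_empty]
  have hfg : Disjoint f g := (hgV.mono_right hfV).symm
  refine (subset_or_disjoint_of_card_inter_ne_one hT.le fun h => ?_).imp_right fun h => h.symm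
  obtain ⟨u, hu⟩ := card_eq_one.mp h
  refine hP (hasCopy_pathP_of_inter hf hwT hg (c := u) ?_ hTg hfg)
  rw [inter_insert_of_notMem (disjoint_right.mp hfg hwg), inter_comm, hu]

theorem avoidsLoosePairs_of_not_hasCopy (hP : ¬ HasCopy pathP H) {B : Finset (Finset ℕ)}
    {T Y : Finset ℕ} (hB : ∀ f ∈ B, f ∈ H.edges ∧ Disjoint f T)
    (hY : ∀ y ∈ Y, insert y T ∈ H.edges) : AvoidsLoosePairs B Y := by
  intro f₁ hf₁ f₂ hf₂ p hp y hy hyf₁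
  by_contra hyp
  have hyf₂ : y ∉ f₂ := fun h => hyp (mem_singleton.mp (hp ▸ mem_inter.mpr ⟨hyf₁, h⟩))
  refine hP (hasCopy_pathP_of_inter (hB f₂ hf₂).1 (hB f₁ hf₁).1 (hY y hy) (c := p) (q := y)
    ?_ ?_ (disjoint_insert_right.mpr ⟨hyf₂, (hB f₂ hf₂).2⟩))
  · rw [inter_comm, hp]
  · rw [inter_insert_of_mem hyf₁, disjoint_iff_inter_eq_empty.mp (hB f₁ hf₁).2, insert_empty]

def inducedEdges (H : ThreeGraph) (A : Finset ℕ) : Finset (Finset ℕ) :=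
  H.edges.filter (· ⊆ A)

theorem mem_inducedEdges {A f : Finset ℕ} : f ∈ H.inducedEdges A ↔ f ∈ H.edges ∧ f ⊆ A :=
  mem_filter

section

variable {V T : Finset ℕ}

theorem mem_powersetCard_of_mem_filter_disjoint {f : Finset ℕ}
    (hf : f ∈ (H.inducedEdges V).filter (Disjoint · T)) : f ∈ (V \ T).powersetCard 3 := by
  obtain ⟨hf, hfT⟩ := mem_filter.mp hf
  obtain ⟨hfE, hfV⟩ := mem_inducedEdges.mp hf
  exact mem_powersetCard.mpr ⟨subset_sdiff.mpr ⟨hfV, hfT⟩, H.card3 f hfE⟩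

theorem card_inducedEdges_le_card_apexes_add_card (hT : T.card = 2)
    (hsplit : ∀ f ∈ H.edges, f ⊆ V → T ⊆ f ∨ Disjoint f T) :
    (H.inducedEdges V).card ≤ (apexes (H.inducedEdges V) V T).card +
      ((H.inducedEdges V).filter (Disjoint · T)).card := by
  refine card_le_card_apexes_add_card_filter_disjoint (fun f hf => ?_) fun f hf => ?_
  all_goals obtain ⟨hfE, hfV⟩ := mem_inducedEdges.mp hf
  exacts [⟨hfV, by rw [H.card3 f hfE, hT]⟩, hsplit f hfE hfV]

theorem card_inducedEdges_le_add_choose_three (hT : T.card = 2) (hTV : T ⊆ V)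
    (hsplit : ∀ f ∈ H.edges, f ⊆ V → T ⊆ f ∨ Disjoint f T) :
    (H.inducedEdges V).card ≤ V.card - 2 + (V.card - 2).choose 3 := by
  have hS : (V \ T).card = V.card - 2 := by rw [card_sdiff_of_subset hTV, hT]
  have hY : (apexes (H.inducedEdges V) V T).card ≤ (V \ T).card := card_le_card (filter_subset _ _)
  have hB : ((H.inducedEdges V).filter (Disjoint · T)).card ≤ ((V \ T).powersetCard 3).card :=
    card_le_card fun f hf => mem_powersetCard_of_mem_filter_disjoint hf
  have := card_inducedEdges_le_card_apexes_add_card hT hsplit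
  rw [card_powersetCard, hS] at hB
  omega

theorem card_inducedEdges_le_max_of_subset (hP : ¬ HasCopy pathP H) {E E' : Finset ℕ} {x : ℕ}
    (hE : E ∈ H.edges) (hE' : E' ∈ H.edges) (hEE' : E ∩ E' = {x}) (hEV : E ∪ E' ⊆ V)
    (hT : T.card = 2) (hTE : T ⊆ E) (hxT : x ∉ T)
    (hsplit : ∀ f ∈ H.edges, f ⊆ V → T ⊆ f ∨ Disjoint f T)
    (hmeet : ∀ f ∈ H.edges, f ⊆ V → (f ∩ (E ∪ E')).Nonempty) :
    (H.inducedEdges V).card ≤ max (3 * (V.card - 2) - 2) ((V.card - 3).choose 2 + 1) := by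
  set B := (H.inducedEdges V).filter (Disjoint · T)
  have hx : x ∈ E ∩ E' := hEE' ▸ mem_singleton_self x
  have hxE : insert x T = E := eq_of_subset_of_card_le (insert_subset (mem_inter.mp hx).1 hTE)
    (by rw [H.card3 E hE, card_insert_of_notMem hxT, hT])
  have hxE' : insert x (E'.erase x) = E' := insert_erase (mem_inter.mp hx).2
  have hE'T : Disjoint E' T := disjoint_left.mpr fun v hvE' hvT =>
    hxT (mem_singleton.mp (hEE' ▸ mem_inter.mpr ⟨hTE hvT, hvE'⟩) ▸ hvT)
  have hxY : x ∈ apexes (H.inducedEdges V) V T :=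
    mem_apexes.mpr ⟨⟨hEV (mem_union_left _ (mem_inter.mp hx).1), hxT⟩,
      hxE ▸ mem_inducedEdges.mpr ⟨hE, subset_union_left.trans hEV⟩⟩
  have hE'B : insert x (E'.erase x) ∈ B := by
    rw [hxE']
    exact mem_filter.mpr ⟨mem_inducedEdges.mpr ⟨hE', subset_union_right.trans hEV⟩, hE'T⟩
  have hmeetE' : ∀ f ∈ B, (f ∩ insert x (E'.erase x)).Nonempty := fun f hf => by
    obtain ⟨hf, hfT⟩ := mem_filter.mp hf
    rw [hxE']
    refine inter_nonempty_of_inter_union_nonempty (mem_inter.mp hx).2 hfT ?_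
    rw [hxE]
    exact hmeet f (mem_inducedEdges.mp hf).1 (mem_inducedEdges.mp hf).2
  have hB : AvoidsLoosePairs B (apexes (H.inducedEdges V) V T) :=
    avoidsLoosePairs_of_not_hasCopy hP
      (fun f hf => ⟨(mem_inducedEdges.mp (mem_filter.mp hf).1).1, (mem_filter.mp hf).2⟩)
      (fun y hy => (mem_inducedEdges.mp (mem_apexes.mp hy).2).1)
  have hcount := hB.card_add_card_le
    (fun f hf => mem_powersetCard.mp (mem_powersetCard_of_mem_filter_disjoint hf))
    (filter_subset _ _) hxY (by rw [card_erase_of_mem (mem_inter.mp hx).2, H.card3 E' hE'])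
    (notMem_erase x E') hE'B hmeetE'
  have hsum : (H.inducedEdges V).card ≤ (apexes (H.inducedEdges V) V T).card + B.card :=
    card_inducedEdges_le_card_apexes_add_card hT hsplit
  rw [card_sdiff_of_subset (hTE.trans (subset_union_left.trans hEV)), hT,
    show V.card - 2 - 1 = V.card - 3 by omega] at hcount
  omega

end

theorem card_inducedEdges_le (hP : ¬ HasCopy pathP H) {V E E' T g : Finset ℕ} {x w : ℕ}
    (hE : E ∈ H.edges) (hE' : E' ∈ H.edges) (hEE' : E ∩ E' = {x}) (hEV : E ∪ E' ⊆ V)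
    (hT : T.card = 2) (hTE : T ⊆ E ∪ E') (hxT : x ∉ T)
    (hwT : insert w T ∈ H.edges) (hg : g ∈ H.edges) (hwg : w ∈ g) (hgV : Disjoint g V)
    (hmeet : ∀ f ∈ H.edges, f ⊆ V → (f ∩ (E ∪ E')).Nonempty) :
    (H.inducedEdges V).card ≤ max (3 * (V.card - 2) - 2) ((V.card - 3).choose 2 + 1) ∧
      (H.inducedEdges V).card ≤ V.card - 2 + (V.card - 2).choose 3 := by
  have hsplit : ∀ f ∈ H.edges, f ⊆ V → T ⊆ f ∨ Disjoint f T := fun f hf hfV =>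
    subset_or_disjoint_of_not_hasCopy hP hT (hTE.trans hEV) hwT hg hwg hgV hf hfV
  refine ⟨?_, card_inducedEdges_le_add_choose_three hT (hTE.trans hEV) hsplit⟩
  rcases hsplit E hE (subset_union_left.trans hEV) with hTE' | hET
  · exact card_inducedEdges_le_max_of_subset hP hE hE' hEE' hEV hT hTE' hxT hsplit hmeet
  rw [union_comm] at hEV hmeet
  exact card_inducedEdges_le_max_of_subset hP hE' hE (by rw [inter_comm, hEE']) hEV hT
    (hET.symm.left_le_of_le_sup_left hTE) hxT hsplit hmeet

theorem card_union_of_inter_eq_singleton {E E' : Finset ℕ} {x : ℕ} (hE : E ∈ H.edges)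
    (hE' : E' ∈ H.edges) (hEE' : E ∩ E' = {x}) : (E ∪ E').card = 5 := by
  have := card_union_add_card_inter E E'
  rw [hEE', H.card3 E hE, H.card3 E' hE', card_singleton] at this
  omega

def isolatedIn (H : ThreeGraph) (W : Finset ℕ) : Finset ℕ :=
  W.filter fun v => ∀ e ∈ H.edges, e ⊆ W → v ∉ e

theorem isolatedIn_subset (W : Finset ℕ) : H.isolatedIn W ⊆ W := filter_subset _ _

theorem disjoint_isolatedIn {W g : Finset ℕ} (hg : g ∈ H.edges) (hgW : g ⊆ W) :
    Disjoint g (H.isolatedIn W) :=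
  disjoint_left.mpr fun _ hvg hv => (mem_filter.mp hv).2 g hg hgW hvg

theorem inter_nonempty_of_subset_union_isolatedIn {U W f : Finset ℕ} (hf : f ∈ H.edges)
    (hfV : f ⊆ U ∪ H.isolatedIn W) : (f ∩ U).Nonempty := by
  refine not_disjoint_iff_nonempty_inter.mp fun hfU => ?_
  have hfW : f ⊆ H.isolatedIn W := hfU.left_le_of_le_sup_left hfV
  obtain ⟨v, hv⟩ := card_pos.mp (by rw [H.card3 f hf]; omega)
  exact disjoint_left.mp (disjoint_isolatedIn hf (hfW.trans (isolatedIn_subset W))) hv (hfW hv)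

theorem exists_edge_disjoint_union_isolatedIn {U W : Finset ℕ} {w : ℕ} (hWU : Disjoint W U)
    (hw : w ∈ W \ H.isolatedIn W) : ∃ g ∈ H.edges, w ∈ g ∧ Disjoint g (U ∪ H.isolatedIn W) := by
  obtain ⟨hwW, hw₀⟩ := mem_sdiff.mp hw
  obtain ⟨g, hg, hgW, hwg⟩ : ∃ g ∈ H.edges, g ⊆ W ∧ w ∈ g := by
    simpa [isolatedIn, hwW] using hw₀
  exact ⟨g, hg, hwg, disjoint_union_right.mpr ⟨hWU.mono_left hgW, disjoint_isolatedIn hg hgW⟩⟩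

end ThreeGraph

open ThreeGraph
theorem fact_UW0_general (H : ThreeGraph)
    (hP : ¬ HasCopy pathP H)
    (e1 e2 : Finset ℕ) (he1 : e1 ∈ H.edges) (he2 : e2 ∈ H.edges)
    (x : ℕ) (hx : e1 ∩ e2 = {x})
    (U W W0 W1 : Finset ℕ) (H1 F21 HUW0 : Finset (Finset ℕ))
    (hU : U = e1 ∪ e2)
    (hW : W = H.verts \ U)
    (hW0 : W0 = W.filter (fun v => ∀ e ∈ H.edges, e ⊆ W → v ∉ e))
    (hW1 : W1 = W \ W0)
    (hH1 : H1 = H.edges.filter (fun e => (e ∩ U).Nonempty ∧ (e ∩ W1).Nonempty))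
    (hF21 : F21 = H1.filter (fun h => ((h ∩ U) \ {x}).card = 2))
    (hne : F21.Nonempty)
    (hHUW0 : HUW0 = H.edges.filter (fun e => e ⊆ U ∪ W0)) :
    (W0.card = 1 → HUW0.card ≤ 8) ∧
    (2 ≤ W0.card → W0.card ≤ 4 → HUW0.card ≤ 3 * W0.card + 7) ∧
    (5 ≤ W0.card → HUW0.card ≤ (W0.card + 2).choose 2 + 1) := by
  change W0 = H.isolatedIn W at hW0
  change HUW0 = H.inducedEdges (U ∪ W0) at hHUW0
  subst hW0 hW1 hH1 hF21 hHUW0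
  obtain ⟨h, hh⟩ := hne
  simp only [mem_filter] at hh
  obtain ⟨⟨hhE, -, w, hw⟩, hT⟩ := hh
  obtain ⟨hwh, hwW⟩ := mem_inter.mp hw
  have hWU : Disjoint W U := hW ▸ sdiff_disjoint
  obtain ⟨g, hg, hwg, hgV⟩ := exists_edge_disjoint_union_isolatedIn hWU hwW
  have hwT : insert w ((h ∩ U) \ {x}) = h := eq_of_subset_of_card_le
    (insert_subset hwh (sdiff_subset.trans inter_subset_left))
    (by rw [H.card3 h hhE, card_insert_of_notMem fun hw => disjoint_left.mp hWU
      (mem_sdiff.mp hwW).1 (mem_inter.mp (mem_sdiff.mp hw).1).2, hT])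
  have hV : (U ∪ H.isolatedIn W).card = (H.isolatedIn W).card + 5 := by
    rw [card_union_of_disjoint (hWU.mono_left (isolatedIn_subset W)).symm, hU,
      card_union_of_inter_eq_singleton he1 he2 hx, add_comm]
  subst hU
  have := card_inducedEdges_le hP he1 he2 hx subset_union_left hT
    (sdiff_subset.trans inter_subset_right) (by simp) (by rwa [hwT]) hg hwg hgV
    fun f hf hfV => inter_nonempty_of_subset_union_isolatedIn hf hfV
  rw [hV, show (H.isolatedIn W).card + 5 - 2 = (H.isolatedIn W).card + 3 by omega,
    show (H.isolatedIn W).card + 5 - 3 = (H.isolatedIn W).card + 2 by omega] at this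
  exact case_bounds_of_le_max_of_le_add_choose this.1 this.2

/-- Fact `UW0`: with the setup of the paper (`Q` a copy of `P₂` with
vertex set `U` and degree-two vertex `x`, some edge disjoint from `U`, `W = V ∖ U`,
`W₀` the isolated vertices of `H[W]` with `s = |W₀| ≥ 1`, `W₁ = W ∖ W₀`, `H₁` the
edges meeting both `U` and `W₁`, and `F²₁ = {h ∈ H₁ : |(h ∩ U) ∖ {x}| = 2} ≠ ∅`),
the number of edges of `H[U ∪ W₀]` is bounded as stated. -/
theorem fact_UW0 (n : ℕ) (H : ThreeGraph) (hv : H.verts.card = n)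
    (hP : ¬ HasCopy pathP H) (hC : ¬ HasCopy triC H) (hp2k3 : HasCopy p2K3 H)
    (e1 e2 : Finset ℕ) (he1 : e1 ∈ H.edges) (he2 : e2 ∈ H.edges)
    (x : ℕ) (hx : e1 ∩ e2 = {x})
    (U W W0 W1 : Finset ℕ) (H1 F21 HUW0 : Finset (Finset ℕ))
    (hU : U = e1 ∪ e2)
    (hdisj : ∃ e ∈ H.edges, Disjoint e U)
    (hW : W = H.verts \ U)
    (hW0 : W0 = W.filter (fun v => ∀ e ∈ H.edges, e ⊆ W → v ∉ e))
    (hs : 1 ≤ W0.card)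
    (hW1 : W1 = W \ W0)
    (hH1 : H1 = H.edges.filter (fun e => (e ∩ U).Nonempty ∧ (e ∩ W1).Nonempty))
    (hF21 : F21 = H1.filter (fun h => ((h ∩ U) \ {x}).card = 2))
    (hne : F21.Nonempty)
    (hHUW0 : HUW0 = H.edges.filter (fun e => e ⊆ U ∪ W0)) :
    (W0.card = 1 → HUW0.card ≤ 8) ∧
    (2 ≤ W0.card → W0.card ≤ 4 → HUW0.card ≤ 3 * W0.card + 7) ∧
    (5 ≤ W0.card → HUW0.card ≤ (W0.card + 2).choose 2 + 1) :=
  fact_UW0_general H hP e1 e2 he1 he2 x hx U W W0 W1 H1 F21 HUW0 hU hW hW0 hW1 hH1 hF21 hne hHUW0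
end
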